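/- arXiv:1005.1147 — 8 statements merged into one kernel-verified Lean document; each statement's English description precedes it below -/
import Mathlib

section
/- Let l ≥ 2 and consider the (l+1)×(l+1) symmetric tridiagonal matrix A over ℚ with zero diagonal whose off-diagonal entries are A_{i,i+1} = A_{i+1,i} = 2 for 1 ≤ i ≤ l-2, and whose boundary entries satisfy (A_{0,1}, A_{l-1,l}) ∈ {(1/2, 2), (1/2, 1/2)}. Then -2 is not an eigenvalue of A. -/
/-!
Read row by row, `A v = -2 v` is a three-term recurrence for the coordinates `w₀, …, w_l` of `v`.
Replacing `w₀` by `u₀ = w₀ / 4` turns the boundary weight `1/2` into the interior weight `2`, after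
which rows `1, …, l-2` say `u_k + u_{k+1} + u_{k+2} = 0`; with `u₁ = -16 u₀` from row `0`, this
gives `u_k = u₀ p_k` for the 3-periodic profile `p = 1, -16, 15, …`. Eliminating `w_l` from the
last two rows leaves `u₀ (4 p_{l-2} + (4 - a²) p_{l-1}) = 0` with `a = A_{l-1,l}`, and the bracket
never vanishes for `a ∈ {2, 1/2}`. Hence `u₀ = 0` and `v = 0`.
-/

open Matrix

section NatExtend

variable {R : Type*} [Zero R] {n : ℕ}

def natExtend (v : Fin n → R) (i : ℕ) : R :=
  if h : i < n then v ⟨i, h⟩ else 0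

@[simp]
lemma natExtend_val (v : Fin n → R) (i : Fin n) : natExtend v i = v i := by
  simp [natExtend]

lemma natExtend_of_le (v : Fin n → R) {i : ℕ} (hi : n ≤ i) : natExtend v i = 0 := by
  simp [natExtend, not_lt.mpr hi]

lemma natExtend_smul {S : Type*} [SMulZeroClass S R] (c : S) (v : Fin n → R) (i : ℕ) :
    natExtend (c • v) i = c • natExtend v i := by
  unfold natExtend
  split_ifs <;> simp

end NatExtend

namespace Matrix

variable {R : Type*} {n : ℕ}

def superdiag [Zero R] (A : Matrix (Fin n) (Fin n) R) (i : ℕ) : R :=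
  if h : i + 1 < n then A ⟨i, by omega⟩ ⟨i + 1, h⟩ else 0

lemma superdiag_of_lt [Zero R] (A : Matrix (Fin n) (Fin n) R) {i : ℕ} (h : i + 1 < n) :
    superdiag A i = A ⟨i, by omega⟩ ⟨i + 1, h⟩ :=
  dif_pos h

variable [NonUnitalNonAssocSemiring R] {A : Matrix (Fin n) (Fin n) R}

lemma mulVec_apply_eq_sum_range_natExtend (v : Fin n → R) (i : Fin n) :
    (A *ᵥ v) i = ∑ j ∈ Finset.range n, natExtend (A i) j * natExtend v j := by
  rw [← Fin.sum_univ_eq_sum_range (fun j => natExtend (A i) j * natExtend v j)]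
  simp [mulVec, dotProduct]

lemma natExtend_mulVec_zero
    (hA : ∀ i j : Fin n, ¬(i.val + 1 = j.val ∨ j.val + 1 = i.val) → A i j = 0)
    (v : Fin n → R) : natExtend (A *ᵥ v) 0 = superdiag A 0 * natExtend v 1 := by
  by_cases h0 : 0 < n
  · have hentry : natExtend (A ⟨0, h0⟩) 1 = superdiag A 0 := by
      simp [natExtend, superdiag]
    rw [natExtend, dif_pos h0, mulVec_apply_eq_sum_range_natExtend, ← hentry]
    refine Finset.sum_eq_single _ (fun j hj hne => ?_) (fun h => ?_)
    · have hj : j < n := Finset.mem_range.mp hj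
      rw [natExtend, dif_pos hj, hA _ _ (by simp only; omega), zero_mul]
    · rw [natExtend_of_le v (by simpa using h), mul_zero]
  · simp [natExtend, superdiag, h0, show ¬1 < n by omega]

/-- The zero values of `natExtend` and `superdiag` out of range make this hold for every `i`,
including the last row and beyond. -/
lemma natExtend_mulVec_succ
    (hA : ∀ i j : Fin n, ¬(i.val + 1 = j.val ∨ j.val + 1 = i.val) → A i j = 0)
    (hS : A.IsSymm) (v : Fin n → R) (i : ℕ) :
    natExtend (A *ᵥ v) (i + 1) =
      superdiag A i * natExtend v i + superdiag A (i + 1) * natExtend v (i + 2) := by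
  by_cases hi : i + 1 < n
  · have hleft : natExtend (A ⟨i + 1, hi⟩) i = superdiag A i := by
      simp [natExtend, superdiag, hi, show i < n by omega, hS.apply]
    have hright : natExtend (A ⟨i + 1, hi⟩) (i + 2) = superdiag A (i + 1) := by
      simp [natExtend, superdiag]
    rw [natExtend, dif_pos hi, mulVec_apply_eq_sum_range_natExtend, ← hleft, ← hright]
    refine Finset.sum_eq_add _ _ (by omega) (fun j hj hne => ?_) (by simp; omega) (fun h => ?_)
    · have hj : j < n := Finset.mem_range.mp hj
      rw [natExtend, dif_pos hj, hA _ _ (by simp only; omega), zero_mul]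
    · rw [natExtend_of_le v (by simpa using h), mul_zero]
  · simp [natExtend, superdiag, hi, show ¬i + 2 < n by omega]

end Matrix

theorem eq_mul_of_linearRecurrence {R : Type*} [CommRing R] {α β c : R} {u p : ℕ → R} {m : ℕ}
    (hu : ∀ k, k + 2 ≤ m → u (k + 2) = α * u (k + 1) + β * u k)
    (hp : ∀ k, p (k + 2) = α * p (k + 1) + β * p k)
    (h0 : u 0 = c * p 0) (h1 : u 1 = c * p 1) : ∀ k ≤ m, u k = c * p k := by
  intro k
  induction k using Nat.strong_induction_on with
  | _ k ih =>
    match k with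
    | 0 => exact fun _ => h0
    | 1 => exact fun _ => h1
    | k + 2 =>
      intro hk
      rw [hu k hk, hp k, ih k (by omega) (by omega), ih (k + 1) (by omega) (by omega)]
      ring

def eigenProfile (k : ℕ) : ℚ :=
  if k % 3 = 0 then 1 else if k % 3 = 1 then -16 else 15

lemma eigenProfile_add_two (k : ℕ) :
    eigenProfile (k + 2) = -1 * eigenProfile (k + 1) + -1 * eigenProfile k := by
  have : k % 3 = 0 ∨ k % 3 = 1 ∨ k % 3 = 2 := by omega
  rcases this with h | h | h <;> simp [eigenProfile, Nat.add_mod, h] <;> norm_num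

lemma four_mul_eigenProfile_add_ne_zero {a : ℚ} (ha : a = 2 ∨ a = 1 / 2) (k : ℕ) :
    4 * eigenProfile k + (4 - a ^ 2) * eigenProfile (k + 1) ≠ 0 := by
  have : k % 3 = 0 ∨ k % 3 = 1 ∨ k % 3 = 2 := by omega
  rcases ha with rfl | rfl <;> rcases this with h | h | h <;>
    simp [eigenProfile, Nat.add_mod, h] <;> norm_num

section SegmentRecurrence

variable {m : ℕ} {b w : ℕ → ℚ}

lemma weight_mul_eq_two_mul_update (hb0 : b 0 = 1 / 2) (hb : ∀ i, 1 ≤ i → i ≤ m → b i = 2)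
    {k : ℕ} (hk : k ≤ m) : b k * w k = 2 * Function.update w 0 (w 0 / 4) k := by
  rcases k with _ | k
  · rw [Function.update_self, hb0]
    ring
  · rw [Function.update_of_ne k.succ_ne_zero, hb _ (by omega) hk]

lemma update_eq_mul_eigenProfile (hb0 : b 0 = 1 / 2) (hb : ∀ i, 1 ≤ i → i ≤ m → b i = 2)
    (h0 : b 0 * w 1 = -2 * w 0)
    (hrow : ∀ i, b i * w i + b (i + 1) * w (i + 2) = -2 * w (i + 1)) :
    ∀ k ≤ m + 1, Function.update w 0 (w 0 / 4) k = w 0 / 4 * eigenProfile k := by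
  refine eq_mul_of_linearRecurrence (fun k hk => ?_) eigenProfile_add_two
    (by simp [eigenProfile]) ?_
  · have hrowk := hrow k
    rw [weight_mul_eq_two_mul_update hb0 hb (by omega), hb (k + 1) (by omega) (by omega)] at hrowk
    simp only [Function.update_of_ne (Nat.succ_ne_zero _)] at hrowk ⊢
    linear_combination hrowk / 2
  · rw [hb0] at h0
    rw [Function.update_of_ne one_ne_zero]
    simp only [eigenProfile, Nat.one_mod, one_ne_zero, ↓reduceIte]
    linear_combination 2 * h0

theorem eq_zero_of_segment_recurrence {a : ℚ} (ha : a = 2 ∨ a = 1 / 2) (hb0 : b 0 = 1 / 2)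
    (hb : ∀ i, 1 ≤ i → i ≤ m → b i = 2) (hbm : b (m + 1) = a) (hbend : b (m + 2) = 0)
    (h0 : b 0 * w 1 = -2 * w 0)
    (hrow : ∀ i, b i * w i + b (i + 1) * w (i + 2) = -2 * w (i + 1)) :
    ∀ k ≤ m + 2, w k = 0 := by
  have hprofile := update_eq_mul_eigenProfile hb0 hb h0 hrow
  have hpen := hrow m
  rw [weight_mul_eq_two_mul_update hb0 hb le_rfl, hprofile m (by omega), hbm] at hpen
  have hlast := hrow (m + 1)
  rw [hbm, hbend, zero_mul, add_zero] at hlast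
  have hw : w (m + 1) = w 0 / 4 * eigenProfile (m + 1) := by
    rw [← hprofile (m + 1) le_rfl, Function.update_of_ne (Nat.succ_ne_zero _)]
  have hw0 : w 0 = 0 := by
    have : w 0 * (4 * eigenProfile m + (4 - a ^ 2) * eigenProfile (m + 1)) = 0 := by
      rw [hw] at hpen hlast
      linear_combination 8 * hpen - 4 * a * hlast
    exact (mul_eq_zero.mp this).resolve_right (four_mul_eigenProfile_add_ne_zero ha m)
  intro k hk
  rcases k with _ | k
  · exact hw0
  rcases (by omega : k ≤ m ∨ k = m + 1) with hk | rfl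
  · rw [← Function.update_of_ne (Nat.succ_ne_zero k) (w 0 / 4) w, hprofile _ (by omega), hw0,
      zero_div, zero_mul]
  · rw [hw, hw0] at hlast
    linear_combination hlast / 2

end SegmentRecurrence

/-- For `l ≥ 2`, the `(l+1)×(l+1)` symmetric tridiagonal matrix over `ℚ` with
zero diagonal, interior off-diagonal entries `2`, and boundary entries
`(A 0 1, A (l-1) l) ∈ {(1/2, 2), (1/2, 1/2)}` does not have `-2` as an eigenvalue. -/
theorem stmt_1 (l : ℕ) (hl : 2 ≤ l)
    (A : Matrix (Fin (l + 1)) (Fin (l + 1)) ℚ)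
    (hsymm : ∀ i j, A i j = A j i)
    (hzero : ∀ i j : Fin (l + 1),
      ¬(i.val + 1 = j.val ∨ j.val + 1 = i.val) → A i j = 0)
    (hint : ∀ i j : Fin (l + 1),
      i.val + 1 = j.val → 1 ≤ i.val → i.val ≤ l - 2 → A i j = 2)
    (hbdry : (A 0 1 = 1/2 ∧ A ⟨l - 1, by omega⟩ ⟨l, by omega⟩ = 2) ∨
             (A 0 1 = 1/2 ∧ A ⟨l - 1, by omega⟩ ⟨l, by omega⟩ = 1/2)) :
    ¬∃ v : Fin (l + 1) → ℚ, v ≠ 0 ∧ A.mulVec v = (-2 : ℚ) • v := by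
  obtain ⟨m, rfl⟩ : ∃ m, l = m + 2 := ⟨l - 2, by omega⟩
  rintro ⟨v, hv, hAv⟩
  obtain ⟨a, ha, hb0, hbm⟩ : ∃ a : ℚ, (a = 2 ∨ a = 1 / 2) ∧ superdiag A 0 = 1 / 2 ∧
      superdiag A (m + 1) = a := by
    rcases hbdry with ⟨h0, hm⟩ | ⟨h0, hm⟩
    · exact ⟨2, Or.inl rfl, h0, (superdiag_of_lt A (by omega)).trans hm⟩
    · exact ⟨1 / 2, Or.inr rfl, h0, (superdiag_of_lt A (by omega)).trans hm⟩
  have hb (i : ℕ) (h1 : 1 ≤ i) (h2 : i ≤ m) : superdiag A i = 2 :=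
    (superdiag_of_lt A (by omega)).trans (hint _ _ rfl h1 (by simpa using h2))
  have hbend : superdiag A (m + 2) = 0 := dif_neg (by omega)
  have hrow0 : superdiag A 0 * natExtend v 1 = -2 * natExtend v 0 := by
    rw [← natExtend_mulVec_zero hzero, hAv, natExtend_smul, smul_eq_mul]
  have hrow (i : ℕ) : superdiag A i * natExtend v i + superdiag A (i + 1) * natExtend v (i + 2) =
      -2 * natExtend v (i + 1) := by
    rw [← natExtend_mulVec_succ hzero (IsSymm.ext fun i j => hsymm j i), hAv, natExtend_smul,
      smul_eq_mul]
  have hw := eq_zero_of_segment_recurrence ha hb0 hb hbm hbend hrow0 hrow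
  exact hv (funext fun j => by simpa using hw j (by omega))
end

section
/- Let Γ₁, Γ₂ be groups, a₁ ∈ M_{l₁}(ℤ[Γ₁]), a₂ ∈ M_{l₂}(ℤ[Γ₂]), and form the block sum a = a₁ ⊕ a₂ ∈ M_{l₁+l₂}(ℤ[Γ₁ × Γ₂]) via the natural embeddings ℤ[Γᵢ] → ℤ[Γ₁×Γ₂]. Then the von Neumann dimension over Γ₁ × Γ₂ of the kernel of a acting on ℓ²(Γ₁×Γ₂)^{l₁+l₂} equals dim_{Γ₁}(ker a₁) + dim_{Γ₂}(ker a₂). -/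
noncomputable section
open scoped InnerProductSpace ENNReal

/-- `ℓ²(G)^l`, realized as `ℓ²` of `Fin l × G`. -/
abbrev GroupL2 (G : Type*) (l : ℕ) := lp (fun _ : Fin l × G => ℂ) 2

/-!
Let `e : Fin lᵢ × Γᵢ ↪ Fin (l₁ + l₂) × (Γ₁ × Γ₂)` be the embedding of index sets given by the
block inclusion and `Γᵢ → Γ₁ × Γ₂`. Extension by zero along `e` is an isometry `ι` whose adjoint is
restriction `ρ` along `e`. Since `a` is block diagonal with `i`-th block induced from `aᵢ`, the
map `ι` sends `ker aᵢ` into `ker a` and `ρ` sends `ker a` into `ker aᵢ`; this forces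
`P ∘ ι = ι ∘ Pᵢ` for the kernel projections. Hence each diagonal coefficient of `P` at a basis
vector `δ_{(k, 1)}` of the `i`-th block equals the corresponding coefficient of `Pᵢ`, and the trace
splits as the sum of the two traces.
-/

open Function

section KernelProjection

variable {𝕜 E F : Type*} [RCLike 𝕜] [NormedAddCommGroup E] [InnerProductSpace 𝕜 E]
  [CompleteSpace E] [NormedAddCommGroup F] [InnerProductSpace 𝕜 F] [CompleteSpace F]

theorem IsStarProjection.apply_eq_of_mem_range_of_inner_eq_zero {P : E →L[𝕜] E}
    (hP : IsStarProjection P) {u v : E} (hv : v ∈ P.range)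
    (huv : ∀ w ∈ P.range, ⟪u - v, w⟫_𝕜 = 0) : P u = v := by
  obtain ⟨_, hPK⟩ := isStarProjection_iff_eq_starProjection_range.mp hP
  rw [hPK]
  exact Submodule.eq_starProjection_of_mem_of_inner_eq_zero hv huv

theorem IsStarProjection.sub_apply_mem_orthogonal {P : E →L[𝕜] E} (hP : IsStarProjection P)
    (x : E) : x - P x ∈ P.rangeᗮ := by
  obtain ⟨_, hPK⟩ := isStarProjection_iff_eq_starProjection_range.mp hP
  have h := P.range.sub_starProjection_mem_orthogonal x
  rwa [← hPK] at h

def IsKernelProjection (P T : E →L[𝕜] E) : Prop :=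
  IsStarProjection P ∧ LinearMap.range (P : E →ₗ[𝕜] E) = LinearMap.ker (T : E →ₗ[𝕜] E)

theorem IsKernelProjection.intertwine_of_adjoint {P S : E →L[𝕜] E} {Q T : F →L[𝕜] F}
    (hP : IsKernelProjection P S) (hQ : IsKernelProjection Q T) (ι : E → F) (ρ : F → E)
    (hιρ : ∀ x y, ⟪ι x, y⟫_𝕜 = ⟪x, ρ y⟫_𝕜) (hι : ∀ x, S x = 0 → T (ι x) = 0)
    (hρ : ∀ y, T y = 0 → S (ρ y) = 0) (x : E) : Q (ι x) = ι (P x) := by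
  have hPx : S (P x) = 0 := LinearMap.mem_ker.mp (hP.2 ▸ LinearMap.mem_range_self _ x)
  refine hQ.1.apply_eq_of_mem_range_of_inner_eq_zero (hQ.2 ▸ hι _ hPx) fun w hw => ?_
  have hρw : ρ w ∈ LinearMap.range (P : E →ₗ[𝕜] E) :=
    hP.2 ▸ hρ w (LinearMap.mem_ker.mp (hQ.2 ▸ hw))
  rw [inner_sub_left, hιρ, hιρ, ← inner_sub_left]
  exact Submodule.inner_left_of_mem_orthogonal hρw (hP.1.sub_apply_mem_orthogonal x)

end KernelProjection

namespace lp

variable {α β E : Type*} [NormedAddCommGroup E]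

theorem memℓp_extend_zero (e : α ↪ β) {f : α → E} (hf : Memℓp f 2) :
    Memℓp (extend e f 0) 2 := by
  refine memℓp_gen ?_
  have hnorm : (fun b => ‖extend e f 0 b‖ ^ (2 : ℝ≥0∞).toReal) =
      extend e (fun a => ‖f a‖ ^ (2 : ℝ≥0∞).toReal) 0 := by
    funext b
    by_cases hb : b ∈ Set.range e
    · obtain ⟨a, rfl⟩ := hb
      rw [e.injective.extend_apply, e.injective.extend_apply]
    · rw [extend_apply' _ _ _ hb, extend_apply' _ _ _ hb]
      simp
  rw [hnorm, summable_extend_zero e.injective]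
  exact hf.summable (by norm_num)

def extendByZero (e : α ↪ β) (f : lp (fun _ : α => E) 2) : lp (fun _ : β => E) 2 :=
  ⟨extend e f 0, memℓp_extend_zero e f.2⟩

theorem extendByZero_apply_self (e : α ↪ β) (f : lp (fun _ : α => E) 2) (a : α) :
    extendByZero e f (e a) = f a :=
  e.injective.extend_apply _ _ a

theorem extendByZero_apply_of_notMem_range (e : α ↪ β) (f : lp (fun _ : α => E) 2) {b : β}
    (hb : b ∉ Set.range e) : extendByZero e f b = 0 :=
  extend_apply' _ _ b hb

def restrict (e : α ↪ β) (f : lp (fun _ : β => E) 2) : lp (fun _ : α => E) 2 :=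
  ⟨f ∘ e, memℓp_gen <| (f.2.summable (by norm_num)).comp_injective e.injective⟩

@[simp]
theorem restrict_apply (e : α ↪ β) (f : lp (fun _ : β => E) 2) (a : α) :
    restrict e f a = f (e a) :=
  rfl

theorem inner_extendByZero_left {𝕜 : Type*} [RCLike 𝕜] [InnerProductSpace 𝕜 E] (e : α ↪ β)
    (f : lp (fun _ : α => E) 2) (g : lp (fun _ : β => E) 2) :
    ⟪extendByZero e f, g⟫_𝕜 = ⟪f, restrict e g⟫_𝕜 := by
  rw [inner_eq_tsum, inner_eq_tsum, ← tsum_extend_zero e.injective]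
  congr 1
  funext b
  by_cases hb : b ∈ Set.range e
  · obtain ⟨a, rfl⟩ := hb
    rw [e.injective.extend_apply, extendByZero_apply_self, restrict_apply]
  · rw [extend_apply' _ _ _ hb, extendByZero_apply_of_notMem_range e f hb, inner_zero_left]
    rfl

@[simp]
theorem restrict_extendByZero (e : α ↪ β) (f : lp (fun _ : α => E) 2) :
    restrict e (extendByZero e f) = f :=
  lp.ext <| funext <| extendByZero_apply_self e f

theorem extendByZero_single [DecidableEq α] [DecidableEq β] (e : α ↪ β) (a : α) (c : E) :
    extendByZero e (lp.single 2 a c) = lp.single 2 (e a) c := by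
  ext b
  by_cases hb : b ∈ Set.range e
  · obtain ⟨a', rfl⟩ := hb
    simp only [extendByZero_apply_self, lp.single_apply, Pi.single_apply, e.injective.eq_iff]
  · rw [extendByZero_apply_of_notMem_range e _ hb,
      lp.single_apply_ne 2 _ _ fun h => hb ⟨a, h.symm⟩]

end lp

section Convolution

variable {G H : Type*} [Group G] [Group H] {l L : ℕ}

def IsRightConvolution (a : Matrix (Fin l) (Fin l) (MonoidAlgebra ℤ G))
    (T : GroupL2 G l →L[ℂ] GroupL2 G l) : Prop :=
  ∀ (f : GroupL2 G l) (i : Fin l) (g : G),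
    T f (i, g) = ∑ j : Fin l, ∑ x ∈ (a i j).coeff.support,
      (((a i j).coeff x : ℤ) : ℂ) * f (j, g * x⁻¹)

structure IsDiagonalBlock {R : Type*} [Semiring R]
    (a' : Matrix (Fin l) (Fin l) (MonoidAlgebra R G)) (a : Matrix (Fin L) (Fin L) (MonoidAlgebra R H))
    (ej : Fin l ↪ Fin L) (φ : G →* H) : Prop where
  apply_apply : ∀ i j, a (ej i) (ej j) = MonoidAlgebra.mapDomain φ (a' i j)
  apply_left_eq_zero : ∀ i k, k ∉ Set.range ej → a (ej i) k = 0
  apply_right_eq_zero : ∀ i k, k ∉ Set.range ej → a k (ej i) = 0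

namespace IsDiagonalBlock

variable {a' : Matrix (Fin l) (Fin l) (MonoidAlgebra ℤ G)}
  {a : Matrix (Fin L) (Fin L) (MonoidAlgebra ℤ H)} {ej : Fin l ↪ Fin L} {φ : G →* H}
  {T' P' : GroupL2 G l →L[ℂ] GroupL2 G l} {T P : GroupL2 H L →L[ℂ] GroupL2 H L}

theorem convolution_apply_embedding (hb : IsDiagonalBlock a' a ej φ) (hφ : Injective φ)
    (hT : IsRightConvolution a T) (w : GroupL2 H L) (i : Fin l) (h : H) :
    T w (ej i, h) = ∑ j : Fin l, ∑ x ∈ (a' i j).coeff.support,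
      (((a' i j).coeff x : ℤ) : ℂ) * w (ej j, h * (φ x)⁻¹) := by
  classical
  rw [hT]
  refine (Fintype.sum_of_injective (M := ℂ) ej ej.injective _ _ (fun k hk => ?_)
    fun j => ?_).symm
  · rw [hb.apply_left_eq_zero i k hk]
    simp
  · rw [hb.apply_apply]
    exact (Finsupp.sum_mapDomain_index_inj
      (h := fun y c => ((c : ℤ) : ℂ) * w (ej j, h * y⁻¹)) hφ).symm

theorem convolution_restrict_eq_zero (hb : IsDiagonalBlock a' a ej φ) (hφ : Injective φ)
    (hT' : IsRightConvolution a' T') (hT : IsRightConvolution a T) {w : GroupL2 H L}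
    (hw : T w = 0) : T' (lp.restrict (ej.prodMap ⟨φ, hφ⟩) w) = 0 := by
  ext ⟨i, g⟩
  calc T' (lp.restrict (ej.prodMap ⟨φ, hφ⟩) w) (i, g) = T w (ej i, φ g) := by
        rw [hT', hb.convolution_apply_embedding hφ hT]
        simp [Function.Embedding.coe_prodMap]
    _ = 0 := by rw [hw]; rfl

theorem convolution_extendByZero_eq_zero (hb : IsDiagonalBlock a' a ej φ) (hφ : Injective φ)
    (hT' : IsRightConvolution a' T') (hT : IsRightConvolution a T) {v : GroupL2 G l}
    (hv : T' v = 0) : T (lp.extendByZero (ej.prodMap ⟨φ, hφ⟩) v) = 0 := by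
  set e := ej.prodMap ⟨φ, hφ⟩
  have he : ∀ k h, (k, h) ∉ Set.range e ↔ k ∉ Set.range ej ∨ h ∉ Set.range φ := by
    intro k h
    rw [Function.Embedding.coe_prodMap, Set.range_prodMap, Set.mem_prod, not_and_or]
    rfl
  ext ⟨k, h⟩
  show T (lp.extendByZero e v) (k, h) = 0
  by_cases hk : k ∈ Set.range ej
  · obtain ⟨i, rfl⟩ := hk
    rw [hb.convolution_apply_embedding hφ hT]
    by_cases hh : h ∈ Set.range φ
    · obtain ⟨g, rfl⟩ := hh
      have hval : ∀ j x, lp.extendByZero e v (ej j, φ g * (φ x)⁻¹) = v (j, g * x⁻¹) := by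
        intro j x
        rw [← map_inv, ← map_mul]
        exact lp.extendByZero_apply_self e v (j, g * x⁻¹)
      simp_rw [hval]
      rw [← hT' v i g, hv]
      rfl
    · have hout : ∀ x, h * (φ x)⁻¹ ∉ Set.range φ := fun x ⟨g, hg⟩ =>
        hh ⟨g * x, by rw [map_mul, hg, inv_mul_cancel_right]⟩
      refine Finset.sum_eq_zero fun j _ => Finset.sum_eq_zero fun x _ => ?_
      rw [lp.extendByZero_apply_of_notMem_range e v ((he _ _).mpr (Or.inr (hout x))), mul_zero]
  · rw [hT]
    refine Finset.sum_eq_zero fun j _ => Finset.sum_eq_zero fun x _ => ?_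
    by_cases hj : j ∈ Set.range ej
    · obtain ⟨j, rfl⟩ := hj
      simp [hb.apply_right_eq_zero j k hk]
    · rw [lp.extendByZero_apply_of_notMem_range e v ((he _ _).mpr (Or.inl hj)), mul_zero]

theorem inner_kernelProjection_single [DecidableEq G] [DecidableEq H]
    (hb : IsDiagonalBlock a' a ej φ) (hφ : Injective φ) (hT' : IsRightConvolution a' T')
    (hT : IsRightConvolution a T) (hP' : IsKernelProjection P' T') (hP : IsKernelProjection P T)
    (i : Fin l) :
    ⟪P (lp.single 2 (ej i, (1 : H)) 1), lp.single 2 (ej i, (1 : H)) 1⟫_ℂ =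
      ⟪P' (lp.single 2 (i, (1 : G)) 1), lp.single 2 (i, (1 : G)) 1⟫_ℂ := by
  set e := ej.prodMap ⟨φ, hφ⟩
  have hsingle : (lp.single 2 (ej i, (1 : H)) 1 : GroupL2 H L) =
      lp.extendByZero e (lp.single 2 (i, (1 : G)) 1) := by
    rw [lp.extendByZero_single]
    simp [e, Function.Embedding.coe_prodMap]
  rw [hsingle, hP'.intertwine_of_adjoint hP _ (lp.restrict e) (lp.inner_extendByZero_left e)
    (fun _ => hb.convolution_extendByZero_eq_zero hφ hT' hT)
    (fun _ => hb.convolution_restrict_eq_zero hφ hT' hT), lp.inner_extendByZero_left,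
    lp.restrict_extendByZero]

end IsDiagonalBlock

end Convolution

section BlockSum

variable {R G H : Type*} [Semiring R] [Group G] [Group H] {l₁ l₂ : ℕ}

theorem isDiagonalBlock_castAdd (A : Matrix (Fin l₁) (Fin l₁) (MonoidAlgebra R G))
    (D : Matrix (Fin l₂) (Fin l₂) (MonoidAlgebra R H)) (φ : G →* H) :
    IsDiagonalBlock A (Matrix.reindex finSumFinEquiv finSumFinEquiv
      (Matrix.fromBlocks (A.map (MonoidAlgebra.mapDomain φ)) 0 0 D)) (Fin.castAddEmb l₂) φ where
  apply_apply i j := by simp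
  apply_left_eq_zero i k hk := by
    induction k using Fin.addCases with
    | left k => exact absurd ⟨k, rfl⟩ hk
    | right k => simp
  apply_right_eq_zero i k hk := by
    induction k using Fin.addCases with
    | left k => exact absurd ⟨k, rfl⟩ hk
    | right k => simp

theorem isDiagonalBlock_natAdd (A : Matrix (Fin l₁) (Fin l₁) (MonoidAlgebra R H))
    (D : Matrix (Fin l₂) (Fin l₂) (MonoidAlgebra R G)) (φ : G →* H) :
    IsDiagonalBlock D (Matrix.reindex finSumFinEquiv finSumFinEquiv
      (Matrix.fromBlocks A 0 0 (D.map (MonoidAlgebra.mapDomain φ)))) (Fin.natAddEmb l₁) φ where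
  apply_apply i j := by simp
  apply_left_eq_zero i k hk := by
    induction k using Fin.addCases with
    | left k => simp
    | right k => exact absurd ⟨k, rfl⟩ hk
  apply_right_eq_zero i k hk := by
    induction k using Fin.addCases with
    | left k => simp
    | right k => exact absurd ⟨k, rfl⟩ hk

end BlockSum

/-- For `a₁ ∈ M_{l₁}(ℤ[Γ₁])`, `a₂ ∈ M_{l₂}(ℤ[Γ₂])` and the block sum
`a = a₁ ⊕ a₂ ∈ M_{l₁+l₂}(ℤ[Γ₁ × Γ₂])`, the von Neumann dimension of `ker a` on
`ℓ²(Γ₁×Γ₂)^{l₁+l₂}` (the `Γ`-trace of the orthogonal projection `P` onto the kernel of the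
right-convolution operator `T` of `a`) equals `dim_{Γ₁}(ker a₁) + dim_{Γ₂}(ker a₂)`. -/
theorem stmt_6 {Γ₁ Γ₂ : Type*} [Group Γ₁] [Group Γ₂]
    [DecidableEq Γ₁] [DecidableEq Γ₂] (l₁ l₂ : ℕ)
    (a₁ : Matrix (Fin l₁) (Fin l₁) (MonoidAlgebra ℤ Γ₁))
    (a₂ : Matrix (Fin l₂) (Fin l₂) (MonoidAlgebra ℤ Γ₂))
    (a : Matrix (Fin (l₁ + l₂)) (Fin (l₁ + l₂)) (MonoidAlgebra ℤ (Γ₁ × Γ₂)))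
    (ha : a = Matrix.reindex finSumFinEquiv finSumFinEquiv
      (Matrix.fromBlocks
        (a₁.map (MonoidAlgebra.mapDomain fun g => (g, (1 : Γ₂))))
        0 0
        (a₂.map (MonoidAlgebra.mapDomain fun g => ((1 : Γ₁), g)))))
    -- the right-convolution operators associated to `a₁`, `a₂`, `a`:
    (T₁ : GroupL2 Γ₁ l₁ →L[ℂ] GroupL2 Γ₁ l₁)
    (hT₁ : ∀ (f : GroupL2 Γ₁ l₁) (i : Fin l₁) (g : Γ₁),
      T₁ f (i, g) = ∑ j : Fin l₁, ∑ x ∈ (a₁ i j).coeff.support,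
        (((a₁ i j).coeff x : ℤ) : ℂ) * f (j, g * x⁻¹))
    (T₂ : GroupL2 Γ₂ l₂ →L[ℂ] GroupL2 Γ₂ l₂)
    (hT₂ : ∀ (f : GroupL2 Γ₂ l₂) (i : Fin l₂) (g : Γ₂),
      T₂ f (i, g) = ∑ j : Fin l₂, ∑ x ∈ (a₂ i j).coeff.support,
        (((a₂ i j).coeff x : ℤ) : ℂ) * f (j, g * x⁻¹))
    (T : GroupL2 (Γ₁ × Γ₂) (l₁ + l₂) →L[ℂ] GroupL2 (Γ₁ × Γ₂) (l₁ + l₂))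
    (hT : ∀ (f : GroupL2 (Γ₁ × Γ₂) (l₁ + l₂)) (i : Fin (l₁ + l₂)) (g : Γ₁ × Γ₂),
      T f (i, g) = ∑ j : Fin (l₁ + l₂), ∑ x ∈ (a i j).coeff.support,
        (((a i j).coeff x : ℤ) : ℂ) * f (j, g * x⁻¹))
    -- the orthogonal projections onto the kernels:
    (P₁ : GroupL2 Γ₁ l₁ →L[ℂ] GroupL2 Γ₁ l₁)
    (hP₁ : IsIdempotentElem P₁) (hP₁sa : IsSelfAdjoint P₁)
    (hP₁r : LinearMap.range (P₁ : GroupL2 Γ₁ l₁ →ₗ[ℂ] GroupL2 Γ₁ l₁) = LinearMap.ker (T₁ : GroupL2 Γ₁ l₁ →ₗ[ℂ] GroupL2 Γ₁ l₁))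
    (P₂ : GroupL2 Γ₂ l₂ →L[ℂ] GroupL2 Γ₂ l₂)
    (hP₂ : IsIdempotentElem P₂) (hP₂sa : IsSelfAdjoint P₂)
    (hP₂r : LinearMap.range (P₂ : GroupL2 Γ₂ l₂ →ₗ[ℂ] GroupL2 Γ₂ l₂) = LinearMap.ker (T₂ : GroupL2 Γ₂ l₂ →ₗ[ℂ] GroupL2 Γ₂ l₂))
    (P : GroupL2 (Γ₁ × Γ₂) (l₁ + l₂) →L[ℂ] GroupL2 (Γ₁ × Γ₂) (l₁ + l₂))
    (hP : IsIdempotentElem P) (hPsa : IsSelfAdjoint P)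
    (hPr : LinearMap.range (P : GroupL2 (Γ₁ × Γ₂) (l₁ + l₂) →ₗ[ℂ] GroupL2 (Γ₁ × Γ₂) (l₁ + l₂)) = LinearMap.ker (T : GroupL2 (Γ₁ × Γ₂) (l₁ + l₂) →ₗ[ℂ] GroupL2 (Γ₁ × Γ₂) (l₁ + l₂))) :
    -- the von Neumann dimension of `ker a` is the sum of those of `ker a₁` and `ker a₂`:
    ∑ i : Fin (l₁ + l₂),
      (⟪P (lp.single 2 (i, (1 : Γ₁ × Γ₂)) 1), lp.single 2 (i, (1 : Γ₁ × Γ₂)) 1⟫_ℂ).re =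
    (∑ i : Fin l₁,
      (⟪P₁ (lp.single 2 (i, (1 : Γ₁)) 1), lp.single 2 (i, (1 : Γ₁)) 1⟫_ℂ).re) +
    (∑ i : Fin l₂,
      (⟪P₂ (lp.single 2 (i, (1 : Γ₂)) 1), lp.single 2 (i, (1 : Γ₂)) 1⟫_ℂ).re) := by
  subst ha
  rw [Fin.sum_univ_add]
  congr 1 <;> refine Finset.sum_congr rfl fun i _ => congrArg Complex.re ?_
  · exact (isDiagonalBlock_castAdd a₁ _ (MonoidHom.inl Γ₁ Γ₂)).inner_kernelProjection_single
      (Prod.mk_left_injective 1) hT₁ hT ⟨⟨hP₁, hP₁sa⟩, hP₁r⟩ ⟨⟨hP, hPsa⟩, hPr⟩ i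
  · exact (isDiagonalBlock_natAdd _ a₂ (MonoidHom.inr Γ₁ Γ₂)).inner_kernelProjection_single
      (Prod.mk_right_injective 1) hT₂ hT ⟨⟨hP₂, hP₂sa⟩, hP₂r⟩ ⟨⟨hP, hPsa⟩, hPr⟩ i
end
end

section
/- If p₁ and p₂ are positive bounded operators on Hilbert spaces H₁ and H₂ respectively, then the kernel of a₁ ⊗ id + id ⊗ a₂ on H₁ ⊗ H₂ equals ker(a₁) ⊗ ker(a₂) (the closed tensor product of the kernels). -/
/-!
The algebraic tensor product `H₁ ⊗[ℂ] H₂`, with its natural inner product, embeds isometrically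
and densely into `H` via `lift tp`. Hence the positive operators `a₁ ⊗ 1` and `1 ⊗ a₂` extend to
positive operators `b₁`, `b₂` on `H`, and `a = b₁ + b₂`. If `a z = 0`, positivity forces
`b₁ z = b₂ z = 0`, so `z` is orthogonal to `tp u v` whenever `u ⊥ ker a₁` or `v ⊥ ker a₂`.
Splitting `H₁ = ker a₁ ⊕ (ker a₁)ᗮ` and `H₂ = ker a₂ ⊕ (ker a₂)ᗮ`, the component of `z` orthogonal
to the closed span of `ker a₁ ⊗ ker a₂` is then orthogonal to every `tp x y`, hence zero.
-/

open scoped InnerProductSpace TensorProduct ComplexOrder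

namespace ContinuousLinearMap

variable {E : Type*} [NormedAddCommGroup E] [InnerProductSpace ℂ E]

theorem isPositive_of_inner_nonneg {T : E →L[ℂ] E} (hT : ∀ x, 0 ≤ ⟪T x, x⟫_ℂ) :
    T.IsPositive :=
  (isPositive_iff_complex T).2 fun x =>
    ⟨(Complex.eq_re_of_ofReal_le (hT x)).symm, Complex.nonneg_iff.1 (hT x) |>.1⟩

variable [CompleteSpace E]

theorem IsPositive.apply_eq_zero_of_re_inner_eq_zero {T : E →L[ℂ] E} (hT : T.IsPositive)
    {x : E} (hx : RCLike.re ⟪T x, x⟫_ℂ = 0) : T x = 0 := by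
  obtain ⟨b, rfl⟩ :=
    CStarAlgebra.nonneg_iff_eq_star_mul_self.1 ((nonneg_iff_isPositive T).2 hT)
  have hbx : b x = 0 := by
    rwa [star_eq_adjoint, mul_apply_eq_comp, adjoint_inner_left, inner_self_eq_norm_sq,
      sq_eq_zero_iff, norm_eq_zero] at hx
  rw [mul_apply_eq_comp, hbx, map_zero]

theorem IsPositive.add_apply_eq_zero_iff {T S : E →L[ℂ] E} (hT : T.IsPositive)
    (hS : S.IsPositive) {x : E} : (T + S) x = 0 ↔ T x = 0 ∧ S x = 0 := by
  refine ⟨fun h => ?_, fun h => by rw [add_apply, h.1, h.2, add_zero]⟩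
  have hsum : RCLike.re ⟪T x, x⟫_ℂ + RCLike.re ⟪S x, x⟫_ℂ = 0 := by
    rw [← map_add, ← inner_add_left, ← add_apply, h, inner_zero_left, map_zero]
  have hT₀ := hT.re_inner_nonneg_left x
  have hS₀ := hS.re_inner_nonneg_left x
  exact ⟨hT.apply_eq_zero_of_re_inner_eq_zero (by linarith),
    hS.apply_eq_zero_of_re_inner_eq_zero (by linarith)⟩

theorem inner_apply_eq_zero_of_mem_orthogonal_ker {F : Type*} [NormedAddCommGroup F]
    [InnerProductSpace ℂ F] {a : E →L[ℂ] E} (ha : IsSelfAdjoint a) {b : F →L[ℂ] F}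
    (hb : (b : F →ₗ[ℂ] F).IsSymmetric) {f : E →L[ℂ] F} (hf : b ∘L f = f ∘L a) {z : F}
    (hz : b z = 0) {u : E} (hu : u ∈ (LinearMap.ker (a : E →ₗ[ℂ] E))ᗮ) :
    ⟪z, f u⟫_ℂ = 0 := by
  have hrange : LinearMap.range (a : E →ₗ[ℂ] E) ≤
      LinearMap.ker ((innerSL ℂ z ∘L f : E →L[ℂ] ℂ) : E →ₗ[ℂ] ℂ) := by
    rintro _ ⟨x, rfl⟩
    simp only [LinearMap.mem_ker, coe_coe, comp_apply, innerSL_apply_apply]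
    rw [← comp_apply f a, ← hf, comp_apply, ← coe_coe b, ← hb, coe_coe, hz, inner_zero_left]
  rw [orthogonal_ker, ha.adjoint_eq] at hu
  simpa using Submodule.topologicalClosure_minimal _ hrange (isClosed_ker _) hu

theorem exists_isPositive_extension {V H : Type*} [NormedAddCommGroup V]
    [InnerProductSpace ℂ V] [NormedAddCommGroup H] [InnerProductSpace ℂ H] [CompleteSpace H]
    (U : V →ₗᵢ[ℂ] H) (hU : DenseRange U) {T : V →L[ℂ] V} (hT : ∀ v, 0 ≤ ⟪T v, v⟫_ℂ) :
    ∃ A : H →L[ℂ] H, A.IsPositive ∧ ∀ v, A (U v) = U (T v) := by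
  set A := (U.toContinuousLinearMap ∘L T).extend U.toContinuousLinearMap
  have hA : ∀ v, A (U v) = U (T v) := extend_eq _ hU U.isometry.isUniformInducing
  refine ⟨A, isPositive_of_inner_nonneg fun w => hU.induction_on w ?_ fun v => ?_, hA⟩
  · exact isClosed_le continuous_const (by fun_prop)
  · rw [hA, U.inner_map_map]
    exact hT v

variable {F : Type*} [NormedAddCommGroup F] [InnerProductSpace ℂ F]

theorem inner_adjoint_rTensor_left (f : E →L[ℂ] E) (t t' : E ⊗[ℂ] F) :
    ⟪(adjoint f).rTensor F t, t'⟫_ℂ = ⟪t, f.rTensor F t'⟫_ℂ := by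
  induction t using TensorProduct.induction_on with
  | zero => simp
  | add t₁ t₂ h₁ h₂ => simp only [map_add, inner_add_left, h₁, h₂]
  | tmul x y =>
    induction t' using TensorProduct.induction_on with
    | zero => simp
    | add t₁ t₂ h₁ h₂ => simp only [map_add, inner_add_right, h₁, h₂]
    | tmul x' y' => simp [adjoint_inner_left]

theorem inner_rTensor_self_nonneg {a : E →L[ℂ] E} (ha : 0 ≤ a) (t : E ⊗[ℂ] F) :
    0 ≤ ⟪a.rTensor F t, t⟫_ℂ := by
  obtain ⟨b, rfl⟩ := CStarAlgebra.nonneg_iff_eq_star_mul_self.1 ha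
  rw [star_eq_adjoint, rTensor_mul, mul_apply_eq_comp, inner_adjoint_rTensor_left,
    inner_self_eq_norm_sq_to_K (E := E ⊗[ℂ] F)]
  positivity

theorem inner_lTensor_self_nonneg {a : E →L[ℂ] E} (ha : 0 ≤ a) (t : F ⊗[ℂ] E) :
    0 ≤ ⟪a.lTensor F t, t⟫_ℂ := by
  rw [lTensor, comp_apply, comp_apply, LinearIsometryEquiv.coe_coe'',
    LinearIsometryEquiv.inner_map_eq_flip, TensorProduct.commIsometry_symm]
  exact inner_rTensor_self_nonneg ha _

end ContinuousLinearMap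

theorem Submodule.mem_orthogonal_span_of_inner_eq_zero {𝕜 E : Type*} [RCLike 𝕜]
    [NormedAddCommGroup E] [InnerProductSpace 𝕜 E] {s : Set E} {v : E}
    (h : ∀ u ∈ s, ⟪u, v⟫_𝕜 = 0) : v ∈ (span 𝕜 s)ᗮ :=
  (isOrtho_span.2 fun u hu _ hv => (Set.mem_singleton_iff.1 hv) ▸ h u hu).ge
    (mem_span_singleton_self v)

open TensorProduct

section HilbertTensorProduct

variable {H₁ H₂ H : Type*} [NormedAddCommGroup H₁] [InnerProductSpace ℂ H₁]
  [NormedAddCommGroup H₂] [InnerProductSpace ℂ H₂]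
  [NormedAddCommGroup H] [InnerProductSpace ℂ H]
  (tp : H₁ →ₗ[ℂ] H₂ →ₗ[ℂ] H)

theorem inner_lift_lift (htp_inner : ∀ (x x' : H₁) (y y' : H₂),
      ⟪tp x y, tp x' y'⟫_ℂ = ⟪x, x'⟫_ℂ * ⟪y, y'⟫_ℂ) (t t' : H₁ ⊗[ℂ] H₂) :
    ⟪lift tp t, lift tp t'⟫_ℂ = ⟪t, t'⟫_ℂ := by
  induction t using TensorProduct.induction_on with
  | zero => simp
  | add t₁ t₂ h₁ h₂ => simp only [map_add, inner_add_left, h₁, h₂]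
  | tmul x y =>
    induction t' using TensorProduct.induction_on with
    | zero => simp
    | add t₁ t₂ h₁ h₂ => simp only [map_add, inner_add_right, h₁, h₂]
    | tmul x' y' => simp [htp_inner]

noncomputable def liftIsometry (htp_inner : ∀ (x x' : H₁) (y y' : H₂),
      ⟪tp x y, tp x' y'⟫_ℂ = ⟪x, x'⟫_ℂ * ⟪y, y'⟫_ℂ) : H₁ ⊗[ℂ] H₂ →ₗᵢ[ℂ] H :=
  (lift tp).isometryOfInner (inner_lift_lift tp htp_inner)

@[simp]
theorem liftIsometry_tmul (htp_inner : ∀ (x x' : H₁) (y y' : H₂),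
      ⟪tp x y, tp x' y'⟫_ℂ = ⟪x, x'⟫_ℂ * ⟪y, y'⟫_ℂ) (x : H₁) (y : H₂) :
    liftIsometry tp htp_inner (x ⊗ₜ y) = tp x y :=
  lift.tmul x y

noncomputable def tpL (htp_inner : ∀ (x x' : H₁) (y y' : H₂),
      ⟪tp x y, tp x' y'⟫_ℂ = ⟪x, x'⟫_ℂ * ⟪y, y'⟫_ℂ) : H₁ →L[ℂ] H₂ →L[ℂ] H :=
  tp.mkContinuous₂ 1 fun x y => by
    rw [one_mul, ← liftIsometry_tmul tp htp_inner, LinearIsometry.norm_map, norm_tmul]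

theorem denseRange_lift
    (htp_dense : (Submodule.span ℂ {z : H | ∃ x y, z = tp x y}).topologicalClosure = ⊤) :
    DenseRange (lift tp) := by
  refine (Submodule.dense_iff_topologicalClosure_eq_top.2 htp_dense).mono ?_
  rw [← LinearMap.coe_range, SetLike.coe_subset_coe, Submodule.span_le]
  rintro _ ⟨x, y, rfl⟩
  exact ⟨x ⊗ₜ y, lift.tmul x y⟩

theorem tp_mem_orthogonal_closure_span (htp_inner : ∀ (x x' : H₁) (y y' : H₂),
      ⟪tp x y, tp x' y'⟫_ℂ = ⟪x, x'⟫_ℂ * ⟪y, y'⟫_ℂ)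
    {K₁ : Submodule ℂ H₁} {K₂ : Submodule ℂ H₂} {u : H₁} {v : H₂} (huv : u ∈ K₁ᗮ ∨ v ∈ K₂ᗮ) :
    tp u v ∈
      (Submodule.span ℂ {z | ∃ x ∈ K₁, ∃ y ∈ K₂, z = tp x y}).topologicalClosureᗮ := by
  rw [Submodule.orthogonal_closure]
  refine Submodule.mem_orthogonal_span_of_inner_eq_zero ?_
  rintro _ ⟨x, hx, y, hy, rfl⟩
  rw [htp_inner]
  rcases huv with hu | hv
  · rw [Submodule.inner_right_of_mem_orthogonal hx hu, zero_mul]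
  · rw [Submodule.inner_right_of_mem_orthogonal hy hv, mul_zero]

theorem mem_closure_span_tp_of_inner_eq_zero [CompleteSpace H]
    (htp_inner : ∀ (x x' : H₁) (y y' : H₂), ⟪tp x y, tp x' y'⟫_ℂ = ⟪x, x'⟫_ℂ * ⟪y, y'⟫_ℂ)
    (htp_dense : (Submodule.span ℂ {z : H | ∃ x y, z = tp x y}).topologicalClosure = ⊤)
    (K₁ : Submodule ℂ H₁) (K₂ : Submodule ℂ H₂) [K₁.HasOrthogonalProjection]
    [K₂.HasOrthogonalProjection] {z : H}
    (hz : ∀ u v, u ∈ K₁ᗮ ∨ v ∈ K₂ᗮ → ⟪z, tp u v⟫_ℂ = 0) :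
    z ∈ (Submodule.span ℂ {z | ∃ x ∈ K₁, ∃ y ∈ K₂, z = tp x y}).topologicalClosure := by
  set M := (Submodule.span ℂ {z | ∃ x ∈ K₁, ∃ y ∈ K₂, z = tp x y}).topologicalClosure
  obtain ⟨m, hm, w, hw, rfl⟩ := M.exists_add_mem_mem_orthogonal z
  have hw_tp : ∀ u v, u ∈ K₁ᗮ ∨ v ∈ K₂ᗮ → ⟪w, tp u v⟫_ℂ = 0 := fun u v huv => by
    rw [← add_sub_cancel_left m w, inner_sub_left, hz u v huv,
      Submodule.inner_right_of_mem_orthogonal hm (tp_mem_orthogonal_closure_span tp htp_inner huv),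
      sub_zero]
  suffices w = 0 by simpa [this]
  have hw_span : w ∈ (Submodule.span ℂ {z : H | ∃ x y, z = tp x y})ᗮ := by
    refine Submodule.mem_orthogonal_span_of_inner_eq_zero ?_
    rintro _ ⟨x, y, rfl⟩
    obtain ⟨x₁, hx₁, x₂, hx₂, rfl⟩ := K₁.exists_add_mem_mem_orthogonal x
    obtain ⟨y₁, hy₁, y₂, hy₂, rfl⟩ := K₂.exists_add_mem_mem_orthogonal y
    have hM : tp x₁ y₁ ∈ M :=
      Submodule.le_topologicalClosure _ (Submodule.subset_span ⟨x₁, hx₁, y₁, hy₁, rfl⟩)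
    rw [inner_eq_zero_symm]
    simp [inner_add_right, hw_tp _ _ (.inl hx₂), hw_tp _ _ (.inr hy₂),
      Submodule.inner_left_of_mem_orthogonal hM hw]
  rwa [(Submodule.topologicalClosure_eq_top_iff).1 htp_dense, Submodule.mem_bot] at hw_span

end HilbertTensorProduct

/-- If `a₁`, `a₂` are positive bounded operators on Hilbert spaces `H₁`, `H₂`,
then the kernel of `a₁ ⊗ id + id ⊗ a₂` on the Hilbert tensor product `H₁ ⊗ H₂` equals the
closed tensor product `ker a₁ ⊗ ker a₂`.  The Hilbert tensor product is axiomatized as a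
Hilbert space `H` with a bilinear map `tp` having dense span of elementary tensors and
multiplicative inner products. -/
theorem stmt_8 {H₁ H₂ H : Type*}
    [NormedAddCommGroup H₁] [InnerProductSpace ℂ H₁] [CompleteSpace H₁]
    [NormedAddCommGroup H₂] [InnerProductSpace ℂ H₂] [CompleteSpace H₂]
    [NormedAddCommGroup H] [InnerProductSpace ℂ H] [CompleteSpace H]
    (tp : H₁ →ₗ[ℂ] H₂ →ₗ[ℂ] H)
    (htp_inner : ∀ (x x' : H₁) (y y' : H₂),
      ⟪tp x y, tp x' y'⟫_ℂ = ⟪x, x'⟫_ℂ * ⟪y, y'⟫_ℂ)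
    (htp_dense :
      (Submodule.span ℂ {z : H | ∃ x y, z = tp x y}).topologicalClosure = ⊤)
    (a₁ : H₁ →L[ℂ] H₁) (a₂ : H₂ →L[ℂ] H₂) (a : H →L[ℂ] H)
    (ha₁sa : IsSelfAdjoint a₁) (ha₁pos : ∀ x, 0 ≤ (⟪a₁ x, x⟫_ℂ).re)
    (ha₂sa : IsSelfAdjoint a₂) (ha₂pos : ∀ y, 0 ≤ (⟪a₂ y, y⟫_ℂ).re)
    (ha : ∀ (x : H₁) (y : H₂), a (tp x y) = tp (a₁ x) y + tp x (a₂ y)) :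
    LinearMap.ker (a : H →ₗ[ℂ] H) =
      (Submodule.span ℂ
        {z : H | ∃ x ∈ LinearMap.ker (a₁ : H₁ →ₗ[ℂ] H₁), ∃ y ∈ LinearMap.ker (a₂ : H₂ →ₗ[ℂ] H₂), z = tp x y}
        ).topologicalClosure := by
  set U := liftIsometry tp htp_inner
  have hU : DenseRange U := denseRange_lift tp htp_dense
  have ha₁ : 0 ≤ a₁ := (ContinuousLinearMap.nonneg_iff_isPositive a₁).2
    ((ContinuousLinearMap.isPositive_def').2 ⟨ha₁sa, ha₁pos⟩)
  have ha₂ : 0 ≤ a₂ := (ContinuousLinearMap.nonneg_iff_isPositive a₂).2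
    ((ContinuousLinearMap.isPositive_def').2 ⟨ha₂sa, ha₂pos⟩)
  obtain ⟨b₁, hb₁pos, hb₁⟩ := ContinuousLinearMap.exists_isPositive_extension U hU
    (ContinuousLinearMap.inner_rTensor_self_nonneg (F := H₂) ha₁)
  obtain ⟨b₂, hb₂pos, hb₂⟩ := ContinuousLinearMap.exists_isPositive_extension U hU
    (ContinuousLinearMap.inner_lTensor_self_nonneg (F := H₁) ha₂)
  have hb₁tp : ∀ x y, b₁ (tp x y) = tp (a₁ x) y := fun x y => by
    simpa [U] using hb₁ (x ⊗ₜ y)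
  have hb₂tp : ∀ x y, b₂ (tp x y) = tp x (a₂ y) := fun x y => by
    simpa [U] using hb₂ (x ⊗ₜ y)
  have hab : a = b₁ + b₂ :=
    ContinuousLinearMap.ext_on (Submodule.dense_iff_topologicalClosure_eq_top.2 htp_dense)
      (by rintro _ ⟨x, y, rfl⟩; simp [ha, hb₁tp, hb₂tp])
  refine le_antisymm (fun z hz => ?_) ?_
  · obtain ⟨hz₁, hz₂⟩ := (hb₁pos.add_apply_eq_zero_iff hb₂pos).1 (hab ▸ hz)
    refine mem_closure_span_tp_of_inner_eq_zero tp htp_inner htp_dense _ _ fun u v huv => ?_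
    rcases huv with hu | hv
    · exact ContinuousLinearMap.inner_apply_eq_zero_of_mem_orthogonal_ker ha₁sa
        hb₁pos.isSymmetric (f := (tpL tp htp_inner).flip v)
        (ContinuousLinearMap.ext fun x => hb₁tp x v) hz₁ hu
    · exact ContinuousLinearMap.inner_apply_eq_zero_of_mem_orthogonal_ker ha₂sa
        hb₂pos.isSymmetric (f := tpL tp htp_inner u) (ContinuousLinearMap.ext (hb₂tp u)) hz₂ hv
  · refine Submodule.topologicalClosure_minimal _ (Submodule.span_le.2 ?_)
      (ContinuousLinearMap.isClosed_ker a)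
    rintro _ ⟨x, hx, y, hy, rfl⟩
    simp_all
end

section
/- Let U ⊆ ℝ_{≥0} satisfy: (1) U is closed under multiplication and addition by non-negative rationals; (2) U is closed under addition; (3) there exist rationals a ≥ 0, q > 0 and d ∈ ℕ, d ≥ 1 such that for every strictly increasing sequence 0 ≤ n₁ < n₂ < … of natural numbers, a + q·Σ_{k=1}^∞ 2^k·2^{-d·n_k} ∈ U. Then U = ℝ_{≥0}. -/
/-!
Write `c = 2⁻ᵈ` and `ρ = 2c²`. Choosing `n_k = 2k + ε_k` with `ε_k ∈ {0, 1}` turns the series of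
hypothesis (3) into `Σ 2ρᵏ c^{ε_k} = 2/(1-ρ) - 2(1-c) Σ ε_k ρᵏ`, so `U` contains `A - B σ` for
every `σ` in the Cantor-type set `{Σ ε_k ρᵏ}`. A sum of `T = 4ᵈ` such sets is the whole interval
`[0, T/(1-ρ)]`: by the greedy algorithm every point of it has a base-`ρ` expansion with digits in
`{0, …, T}`, and a digit `e ≤ T` is the number of indices `t < T` with `t < e`. Closure under
addition therefore puts a nondegenerate interval into `U`, and the rational affine maps
`x ↦ s x + c'` move it over any positive real.
-/

open Finset

noncomputable def greedyDigit (T : ℕ) (w : ℝ) : ℕ := min T ⌊w⌋₊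

noncomputable def greedyRemainder (ρ : ℝ) (T : ℕ) (W : ℝ) : ℕ → ℝ
  | 0 => W
  | k + 1 => (greedyRemainder ρ T W k - greedyDigit T (greedyRemainder ρ T W k)) / ρ

section GreedyExpansion

variable {ρ w W : ℝ} {T : ℕ}

lemma greedyDigit_le (w : ℝ) : greedyDigit T w ≤ T := min_le_left _ _

lemma greedyDigit_le_self (hw : 0 ≤ w) : (greedyDigit T w : ℝ) ≤ w :=
  (Nat.cast_le.mpr (min_le_right _ _)).trans (Nat.floor_le hw)

lemma sub_greedyDigit_le (hρ : ρ < 1) (hT : 1 - ρ ≤ T * ρ) (hw : w ≤ T / (1 - ρ)) :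
    w - greedyDigit T w ≤ ρ * (T / (1 - ρ)) := by
  have h1ρ : 0 < 1 - ρ := sub_pos.mpr hρ
  have hρC : ρ * (T / (1 - ρ)) = T / (1 - ρ) - T := by field_simp; ring
  rcases le_total ⌊w⌋₊ T with hfl | hfl
  · have hone : 1 ≤ ρ * (T / (1 - ρ)) := by
      rw [← mul_div_assoc, le_div_iff₀ h1ρ]; linarith
    have := Nat.lt_floor_add_one w
    rw [greedyDigit, min_eq_right hfl]
    linarith
  · rw [greedyDigit, min_eq_left hfl]
    linarith

lemma greedyRemainder_mem_Icc (hρ0 : 0 < ρ) (hρ1 : ρ < 1) (hT : 1 - ρ ≤ T * ρ)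
    (hW : W ∈ Set.Icc 0 (T / (1 - ρ))) (k : ℕ) :
    greedyRemainder ρ T W k ∈ Set.Icc 0 (T / (1 - ρ)) := by
  induction k with
  | zero => exact hW
  | succ k ih =>
    have hdigit := greedyDigit_le_self (T := T) ih.1
    have hrest := sub_greedyDigit_le hρ1 hT ih.2
    exact ⟨div_nonneg (by linarith) hρ0.le, (div_le_iff₀' hρ0).mpr hrest⟩

lemma sum_greedyDigit_mul_pow (hρ : ρ ≠ 0) (K : ℕ) :
    ∑ k ∈ range K, (greedyDigit T (greedyRemainder ρ T W k) : ℝ) * ρ ^ k =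
      W - ρ ^ K * greedyRemainder ρ T W K := by
  induction K with
  | zero => simp [greedyRemainder]
  | succ K ih =>
    rw [sum_range_succ, ih, greedyRemainder, pow_succ]
    field_simp
    ring

lemma hasSum_greedyDigit_mul_pow (hρ0 : 0 < ρ) (hρ1 : ρ < 1) (hT : 1 - ρ ≤ T * ρ)
    (hW : W ∈ Set.Icc 0 (T / (1 - ρ))) :
    HasSum (fun k ↦ (greedyDigit T (greedyRemainder ρ T W k) : ℝ) * ρ ^ k) W := by
  have hrem := greedyRemainder_mem_Icc hρ0 hρ1 hT hW
  rw [hasSum_iff_tendsto_nat_of_nonneg (fun k ↦ by positivity)]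
  simp only [sum_greedyDigit_mul_pow hρ0.ne']
  have hgeom := (tendsto_pow_atTop_nhds_zero_of_lt_one hρ0.le hρ1).mul_const (T / (1 - ρ))
  rw [zero_mul] at hgeom
  have htail : Filter.Tendsto (fun K ↦ ρ ^ K * greedyRemainder ρ T W K) Filter.atTop (nhds 0) :=
    squeeze_zero (fun K ↦ mul_nonneg (pow_nonneg hρ0.le K) (hrem K).1)
      (fun K ↦ mul_le_mul_of_nonneg_left (hrem K).2 (pow_nonneg hρ0.le K)) hgeom
  simpa using htail.const_sub W

end GreedyExpansion

section CantorSums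

variable {ρ : ℝ}

noncomputable def cantorSum (ρ : ℝ) (ε : ℕ → Bool) : ℝ := ∑' k, if ε k then ρ ^ k else 0

lemma summable_ite_pow (hρ0 : 0 ≤ ρ) (hρ1 : ρ < 1) (ε : ℕ → Bool) :
    Summable fun k ↦ if ε k then ρ ^ k else 0 :=
  (summable_geometric_of_lt_one hρ0 hρ1).of_nonneg_of_le
    (fun k ↦ by split_ifs <;> positivity) (fun k ↦ by split_ifs <;> simp [pow_nonneg hρ0])

lemma sum_range_ite_lt {T e : ℕ} (he : e ≤ T) (x : ℝ) :
    ∑ t ∈ range T, (if t < e then x else 0) = e * x := by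
  rw [← sum_filter, show (range T).filter (· < e) = range e by
    ext t; simp only [mem_filter, mem_range]; omega]
  simp

lemma exists_sum_cantorSum_eq (hρ0 : 0 < ρ) (hρ1 : ρ < 1) {T : ℕ} (hT : 1 - ρ ≤ T * ρ)
    {W : ℝ} (hW : W ∈ Set.Icc 0 (T / (1 - ρ))) :
    ∃ ε : ℕ → ℕ → Bool, ∑ t ∈ range T, cantorSum ρ (ε t) = W := by
  refine ⟨fun t k ↦ decide (t < greedyDigit T (greedyRemainder ρ T W k)), ?_⟩
  simp only [cantorSum]
  rw [← Summable.tsum_finsetSum fun t _ ↦ summable_ite_pow hρ0.le hρ1 _]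
  simp only [decide_eq_true_eq]
  rw [tsum_congr fun k ↦ sum_range_ite_lt (greedyDigit_le _) _]
  exact (hasSum_greedyDigit_mul_pow hρ0 hρ1 hT hW).tsum_eq

lemma tsum_two_mul_pow_mul_pow_toNat (hρ0 : 0 ≤ ρ) (hρ1 : ρ < 1) (c : ℝ) (ε : ℕ → Bool) :
    ∑' k, 2 * ρ ^ k * c ^ (ε k).toNat = 2 / (1 - ρ) - 2 * (1 - c) * cantorSum ρ ε := by
  have hterm : ∀ k, 2 * ρ ^ k * c ^ (ε k).toNat =
      2 * ρ ^ k - 2 * (1 - c) * (if ε k then ρ ^ k else 0) := by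
    intro k
    cases ε k <;> simp only [Bool.toNat_false, Bool.toNat_true, Bool.false_eq_true, if_true,
      if_false] <;> ring
  rw [tsum_congr hterm, Summable.tsum_sub
    ((summable_geometric_of_lt_one hρ0 hρ1).mul_left 2)
    ((summable_ite_pow hρ0 hρ1 ε).mul_left _), tsum_mul_left, tsum_mul_left,
    tsum_geometric_of_lt_one hρ0 hρ1, cantorSum, div_eq_mul_inv]

end CantorSums

lemma two_pow_mul_two_zpow (d k j : ℕ) :
    (2 : ℝ) ^ (k + 1) * (2 : ℝ) ^ (-((d : ℤ) * ((2 * k + j : ℕ) : ℤ))) =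
      2 * (2 * ((2 : ℝ) ^ d)⁻¹ ^ 2) ^ k * ((2 : ℝ) ^ d)⁻¹ ^ j := by
  rw [show -((d : ℤ) * ((2 * k + j : ℕ) : ℤ)) = -((d * (2 * k + j) : ℕ) : ℤ) by push_cast; ring,
    zpow_neg, zpow_natCast]
  simp only [inv_pow, ← pow_mul, mul_pow, mul_add, pow_add, pow_succ]
  field_simp
  ring

lemma strictMono_two_mul_add_toNat (ε : ℕ → Bool) : StrictMono fun k ↦ 2 * k + (ε k).toNat :=
  strictMono_nat_of_lt_succ fun k ↦ by
    have := Bool.toNat_le (ε k)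
    omega

section AffineClosure

variable {U : Set ℝ}

lemma Icc_subset_of_forall_sub_mul_cantorSum_mem (h2 : ∀ r ∈ U, ∀ s ∈ U, r + s ∈ U)
    (h0 : (0 : ℝ) ∈ U) {ρ A B : ℝ} {T : ℕ} (hρ0 : 0 < ρ) (hρ1 : ρ < 1)
    (hT : 1 - ρ ≤ T * ρ) (hB : 0 < B) (hmem : ∀ ε, A - B * cantorSum ρ ε ∈ U) :
    Set.Icc (T * A - B * (T / (1 - ρ))) (T * A) ⊆ U := by
  intro y ⟨hyα, hyβ⟩
  let M : AddSubmonoid ℝ := ⟨⟨U, fun ha hb ↦ h2 _ ha _ hb⟩, h0⟩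
  have hW : (T * A - y) / B ∈ Set.Icc 0 (T / (1 - ρ)) :=
    ⟨div_nonneg (by linarith) hB.le, (div_le_iff₀' hB).mpr (by linarith)⟩
  obtain ⟨ε, hε⟩ := exists_sum_cantorSum_eq hρ0 hρ1 hT hW
  have hsum : ∑ t ∈ range T, (A - B * cantorSum ρ (ε t)) = y := by
    rw [sum_sub_distrib, ← mul_sum, hε, sum_const, card_range, nsmul_eq_mul]
    field_simp
    ring
  exact hsum ▸ M.sum_mem (t := range T) fun t _ ↦ hmem (ε t)

lemma Ioi_subset_of_Icc_subset
    (h1 : ∀ r ∈ U, ∀ c : ℚ, 0 ≤ c → ((c : ℝ) * r ∈ U ∧ (c : ℝ) + r ∈ U))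
    {α β : ℝ} (hαβ : α < β) (hβ : 0 < β) (hI : Set.Icc α β ⊆ U) : Set.Ioi 0 ⊆ U := by
  intro x hx
  obtain ⟨s, hs0, hsβ⟩ := exists_rat_btwn (div_pos hx hβ)
  have hs0' : (0 : ℝ) < s := hs0
  rw [lt_div_iff₀ hβ] at hsβ
  obtain ⟨c, hc1, hc2⟩ := exists_rat_btwn (show x - s * β < x - s * α by nlinarith)
  have hmid : (x - c) / s ∈ Set.Icc α β := by
    constructor
    · rw [le_div_iff₀ hs0']; linarith
    · rw [div_le_iff₀ hs0']; linarith
  have hmem := (h1 _ (h1 _ (hI hmid) s (by exact_mod_cast hs0'.le)).1 c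
    (by exact_mod_cast (by linarith : (0 : ℝ) ≤ c))).2
  rwa [mul_div_cancel₀ _ hs0'.ne', add_sub_cancel] at hmem

end AffineClosure

/-- Proposition about sets closed under the given operations: a set
`U ⊆ ℝ_{≥0}` closed under multiplication and addition by non-negative rationals, closed
under addition, and containing all numbers `a + q·Σ_{k≥1} 2^k 2^{-d·n_k}` for every strictly
increasing sequence `(n_k)`, must be all of `ℝ_{≥0}`. -/
theorem stmt_9 (U : Set ℝ)
    (hU : U ⊆ Set.Ici (0 : ℝ))
    (h1 : ∀ r ∈ U, ∀ c : ℚ, 0 ≤ c → ((c : ℝ) * r ∈ U ∧ (c : ℝ) + r ∈ U))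
    (h2 : ∀ r ∈ U, ∀ s ∈ U, r + s ∈ U)
    (h3 : ∃ (a q : ℚ) (d : ℕ), 0 ≤ a ∧ 0 < q ∧ 1 ≤ d ∧
      ∀ n : ℕ → ℕ, StrictMono n →
        (a : ℝ) + (q : ℝ) *
          ∑' k : ℕ, (2 : ℝ) ^ (k + 1) * (2 : ℝ) ^ (-((d : ℤ) * (n k : ℤ))) ∈ U) :
    U = Set.Ici 0 := by
  obtain ⟨a, q, d, ha, hq, hd, h3⟩ := h3
  have ha' : (0 : ℝ) ≤ a := by exact_mod_cast ha
  have hq' : (0 : ℝ) < q := by exact_mod_cast hq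
  have h2d : (2 : ℝ) ≤ 2 ^ d := le_self_pow₀ one_le_two (by omega)
  obtain ⟨c, hc⟩ : ∃ c : ℝ, c = ((2 : ℝ) ^ d)⁻¹ := ⟨_, rfl⟩
  have hc0 : 0 < c := by rw [hc]; positivity
  have hc1 : c ≤ 1 / 2 := by rw [hc, one_div]; exact inv_anti₀ two_pos h2d
  obtain ⟨ρ, hρ⟩ : ∃ ρ : ℝ, ρ = 2 * c ^ 2 := ⟨_, rfl⟩
  have hρ0 : 0 < ρ := by rw [hρ]; positivity
  have hρ1 : ρ < 1 := by rw [hρ]; nlinarith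
  have h1ρ : 0 < 1 - ρ := by linarith
  have h1c : 0 < 1 - c := by linarith
  have hTρ : ((4 ^ d : ℕ) : ℝ) * ρ = 2 := by
    rw [Nat.cast_pow, show ((4 : ℕ) : ℝ) = 2 ^ 2 by norm_num, ← pow_mul, mul_comm 2 d, pow_mul,
      hρ, hc]
    field_simp
  have hmem : ∀ ε, (a + q * (2 / (1 - ρ))) - 2 * q * (1 - c) * cantorSum ρ ε ∈ U := by
    intro ε
    convert h3 _ (strictMono_two_mul_add_toNat ε) using 1
    simp only [two_pow_mul_two_zpow, ← hc, ← hρ, tsum_two_mul_pow_mul_pow_toNat hρ0.le hρ1]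
    ring
  have h0 : (0 : ℝ) ∈ U := by simpa using (h1 _ (hmem fun _ ↦ false) 0 le_rfl).1
  have hI := Icc_subset_of_forall_sub_mul_cantorSum_mem h2 h0 hρ0 hρ1 (by linarith)
    (by positivity) hmem
  have hpos := Ioi_subset_of_Icc_subset h1 (by
    have : 0 < 2 * q * (1 - c) * ((4 ^ d : ℕ) / (1 - ρ)) := by positivity
    linarith) (by positivity) hI
  rw [← Set.Ioi_insert] at hU ⊢
  exact subset_antisymm hU (Set.insert_subset h0 hpos)
end

section
/- Let D ≥ 2 be an integer and r a real number of the form r = Σ_{n ∈ I} 2^{-Dn} for some subset I ⊆ ℕ. Then r can be written as a sum of 2^{D-1} real numbers, each of the form Σ_{k=0}^∞ 2^k · 2^{-D·m_k} for some strictly increasing sequence 0 ≤ m₀ < m₁ < m₂ < … depending on the summand, where finite sums are allowed as degenerate cases. -/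
open Finset ENNReal

namespace S10

def off (D s i : ℕ) : ℕ := if s = 0 then i else 2^(D-1) + 2^(s-1) - 1 + i / 2^(D-s)
def rho (D s : ℕ) : ℕ := if s = 0 then 0 else D - s
def JJ (D i k : ℕ) : ℕ := (k / D) * (2^D - 1) + off D (k % D) i

lemma sum_div_count {M : Type*} [AddCommMonoid M] (g : ℕ → M) (C a : ℕ) (ha : 0 < a) (b : ℕ) :
    ∑ i ∈ Finset.range (b * a), g (C + i / a) = ∑ v ∈ Finset.range b, a • g (C + v) := by
  induction b with
  | zero => simp
  | succ b ih =>
    have h1 : b * a ≤ (b+1) * a := by nlinarith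
    rw [Finset.range_eq_Ico, ← Finset.sum_Ico_consecutive _ (Nat.zero_le (b*a)) h1,
      ← Finset.range_eq_Ico, ih, Finset.sum_Ico_eq_sum_range]
    have h2 : (b+1) * a - b * a = a := by rw [Nat.succ_mul]; omega
    rw [h2]
    have h3 : ∀ v ∈ Finset.range a, g (C + (b*a + v)/a) = g (C + b) := by
      intro v hv
      rw [Nat.add_comm (b*a), Nat.add_mul_div_right _ _ ha, Nat.div_eq_of_lt (Finset.mem_range.1 hv),
        Nat.zero_add]
    rw [Finset.sum_congr rfl h3, Finset.sum_const, Finset.card_range, Finset.sum_range_succ]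

lemma sum_blocks {M : Type*} [AddCommMonoid M] (h : ℕ → M) (C : ℕ) (d : ℕ) (hd : 1 ≤ d) :
    ∑ s ∈ Finset.Ico 1 d, ∑ v ∈ Finset.range (2^(s-1)), h (C + (2^(s-1) + v))
      = ∑ w ∈ Finset.Ico 1 (2^(d-1)), h (C + w) := by
  induction d, hd using Nat.le_induction with
  | base => simp
  | succ d hd ih =>
    rw [Finset.sum_Ico_succ_top hd, ih]
    have h2 : (2:ℕ)^d = 2^(d-1) + 2^(d-1) := by
      have h : d - 1 + 1 = d := by omega
      calc (2:ℕ)^d = 2^(d-1+1) := by rw [h]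
        _ = 2^(d-1) + 2^(d-1) := by rw [pow_succ]; ring
    have h4 : (1:ℕ) ≤ 2^(d-1) := Nat.one_le_two_pow
    have hd1 : d + 1 - 1 = d := by omega
    rw [hd1]
    have hstep : ∑ v ∈ Finset.range (2^(d-1)), h (C + (2^(d-1) + v))
        = ∑ w ∈ Finset.Ico (2^(d-1)) (2^d), h (C + w) := by
      rw [Finset.sum_Ico_eq_sum_range]
      have h5 : (2:ℕ)^d - 2^(d-1) = 2^(d-1) := by omega
      rw [h5]
    rw [hstep]
    exact Finset.sum_Ico_consecutive _ (by omega) (by omega)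

lemma starSum (D : ℕ) (hD : 2 ≤ D) (g : ℕ → ℝ≥0∞) :
    ∑ i ∈ Finset.range (2^(D-1)), ∑ s ∈ Finset.range D, g (off D s i) * ((2:ℝ≥0∞)^(rho D s))⁻¹
      = ∑ u ∈ Finset.range (2^D - 1), g u := by
  have hD0 : 0 < D := by omega
  have hE1 : (1:ℕ) ≤ 2^(D-1) := Nat.one_le_two_pow
  have h2D : (2:ℕ)^D = 2^(D-1) + 2^(D-1) := by
    have h : D - 1 + 1 = D := by omega
    calc (2:ℕ)^D = 2^(D-1+1) := by rw [h]
      _ = 2^(D-1) + 2^(D-1) := by rw [pow_succ]; ring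
  rw [Finset.sum_comm, Finset.range_eq_Ico, Finset.sum_eq_sum_Ico_succ_bot hD0,
    Nat.zero_add]
  have h0 : ∑ i ∈ Finset.range (2^(D-1)), g (off D 0 i) * ((2:ℝ≥0∞)^(rho D 0))⁻¹
      = ∑ u ∈ Finset.range (2^(D-1)), g u := by
    simp [off, rho]
  have h1 : ∀ s ∈ Finset.Ico 1 D,
      ∑ i ∈ Finset.range (2^(D-1)), g (off D s i) * ((2:ℝ≥0∞)^(rho D s))⁻¹
      = ∑ v ∈ Finset.range (2^(s-1)), g (2^(D-1) - 1 + (2^(s-1) + v)) := by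
    intro s hs
    rw [Finset.mem_Ico] at hs
    have hs1 : s ≠ 0 := by omega
    have hE : 2^(D-1) = 2^(s-1) * 2^(D-s) := by rw [← pow_add]; congr 1; omega
    have ha : 0 < 2^(D-s) := Nat.two_pow_pos _
    have h1le : (1:ℕ) ≤ 2^(s-1) := Nat.one_le_two_pow
    simp only [off, rho, if_neg hs1]
    have harg : ∀ i : ℕ, (2^(D-1) + 2^(s-1) - 1 + i : ℕ) = (2^(D-1) - 1) + (2^(s-1) + i) := by
      intro i; omega
    have key := sum_div_count g (2^(D-1) - 1 + 2^(s-1)) (2^(D-s)) ha (2^(s-1))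
    calc ∑ i ∈ Finset.range (2^(D-1)), g (2^(D-1) + 2^(s-1) - 1 + i / 2^(D-s)) * ((2:ℝ≥0∞)^(D-s))⁻¹
        = (∑ i ∈ Finset.range (2^(s-1) * 2^(D-s)), g ((2^(D-1) - 1 + 2^(s-1)) + i / 2^(D-s)))
            * ((2:ℝ≥0∞)^(D-s))⁻¹ := by
          rw [← Finset.sum_mul, ← hE]
          congr 1
          exact Finset.sum_congr rfl fun i _ => by rw [harg]; congr 1; omega
      _ = (∑ v ∈ Finset.range (2^(s-1)), (2^(D-s) : ℕ) • g ((2^(D-1) - 1 + 2^(s-1)) + v))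
            * ((2:ℝ≥0∞)^(D-s))⁻¹ := by rw [key]
      _ = ∑ v ∈ Finset.range (2^(s-1)), g (2^(D-1) - 1 + (2^(s-1) + v)) := by
          rw [Finset.sum_mul]
          apply Finset.sum_congr rfl
          intro v _
          have hcast : ((2^(D-s) : ℕ) : ℝ≥0∞) = (2:ℝ≥0∞)^(D-s) := by push_cast; ring
          rw [nsmul_eq_mul, hcast, mul_comm ((2:ℝ≥0∞)^(D-s)), mul_assoc,
            ENNReal.mul_inv_cancel (by positivity) (ENNReal.pow_ne_top ENNReal.ofNat_ne_top), mul_one]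
          congr 1
          omega
  rw [Finset.sum_congr rfl h1]
  have hb := sum_blocks g (2^(D-1) - 1) D (by omega)
  rw [hb, h0]
  have h2 : ∑ w ∈ Finset.Ico 1 (2^(D-1)), g (2^(D-1) - 1 + w)
      = ∑ u ∈ Finset.Ico (2^(D-1)) (2^D - 1), g u := by
    rw [Finset.sum_Ico_eq_sum_range, Finset.sum_Ico_eq_sum_range]
    apply Finset.sum_congr (by congr 1 <;> omega)
    intro t _
    congr 1
    omega
  rw [h2, Finset.range_eq_Ico, Finset.sum_Ico_consecutive _ (by omega) (by omega),
    ← Finset.range_eq_Ico]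

lemma off_lt (D : ℕ) (hD : 2 ≤ D) {s i : ℕ} (hs : s < D) (hi : i < 2^(D-1)) :
    off D s i < 2^D - 1 := by
  have hE1 : (1:ℕ) ≤ 2^(D-1) := Nat.one_le_two_pow
  have h2D : (2:ℕ)^D = 2^(D-1) + 2^(D-1) := by
    have h : D - 1 + 1 = D := by omega
    calc (2:ℕ)^D = 2^(D-1+1) := by rw [h]
      _ = 2^(D-1) + 2^(D-1) := by rw [pow_succ]; ring
  unfold off
  split
  · omega
  · rename_i hs0
    have hdiv : i / 2^(D-s) < 2^(s-1) := by
      rw [Nat.div_lt_iff_lt_mul (Nat.two_pow_pos _)]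
      calc i < 2^(D-1) := hi
        _ = 2^(s-1) * 2^(D-s) := by rw [← pow_add]; congr 1; omega
    have hs2 : 2^(s-1) + 2^(s-1) = 2^s := by
      have h : s - 1 + 1 = s := by omega
      calc 2^(s-1) + 2^(s-1) = 2^(s-1+1) := by rw [pow_succ]; ring
        _ = 2^s := by rw [h]
    have hs3 : (2:ℕ)^s ≤ 2^(D-1) := Nat.pow_le_pow_right (by omega) (by omega)
    omega

lemma off_mono (D : ℕ) (hD : 2 ≤ D) {s i : ℕ} (hs : s + 1 < D) (hi : i < 2^(D-1)) :
    off D s i < off D (s+1) i := by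
  rcases Nat.eq_zero_or_pos s with rfl | hs0
  · have : i / 2^(D-1) = 0 := Nat.div_eq_of_lt hi
    simp [off, this]
    exact hi
  · have hs1 : s ≠ 0 := by omega
    have hs2 : s + 1 ≠ 0 := by omega
    simp only [off, if_neg hs1, if_neg hs2]
    have hdd : s + 1 - 1 = s := by omega
    rw [hdd]
    have hdiv : i / 2^(D-s) ≤ i / 2^(D-(s+1)) :=
      Nat.div_le_div_left (Nat.pow_le_pow_right (by omega) (by omega)) (Nat.two_pow_pos _)
    have hp : (2:ℕ)^(s-1) < 2^s := Nat.pow_lt_pow_right (by omega) (by omega)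
    have h1 : (1:ℕ) ≤ 2^(s-1) := Nat.one_le_two_pow
    omega

lemma JJ_mono (D : ℕ) (hD : 2 ≤ D) {i : ℕ} (hi : i < 2^(D-1)) : StrictMono (JJ D i) := by
  have hD0 : 0 < D := by omega
  apply strictMono_nat_of_lt_succ
  intro k
  set q := k / D with hq
  set s := k % D with hs
  have hsD : s < D := Nat.mod_lt _ hD0
  have hk : k = D * q + s := by rw [hq, hs]; exact (Nat.div_add_mod k D).symm
  by_cases hcase : s + 1 = D
  · have hmul : D * (q + 1) = D * q + D := by ring
    have hk1 : k + 1 = D * (q + 1) := by omega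
    have hdiv : (k+1) / D = q + 1 := by rw [hk1, Nat.mul_div_cancel_left _ hD0]
    have hmod : (k+1) % D = 0 := by rw [hk1]; exact Nat.mul_mod_right _ _
    unfold JJ
    rw [hdiv, hmod, ← hq, ← hs]
    have h1 := off_lt D hD hsD hi
    have h2 : off D 0 i = i := rfl
    have : (q+1) * (2^D - 1) = q * (2^D - 1) + (2^D - 1) := by ring
    omega
  · have hk1 : k + 1 = D * q + (s + 1) := by omega
    have hdiv : (k+1) / D = q := by
      rw [hk1, Nat.mul_add_div hD0, Nat.div_eq_of_lt (by omega), Nat.add_zero]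
    have hmod : (k+1) % D = s + 1 := by
      rw [hk1, Nat.mul_add_mod, Nat.mod_eq_of_lt (by omega)]
    unfold JJ
    rw [hdiv, hmod, ← hq, ← hs]
    exact Nat.add_lt_add_left (off_mono D hD (by omega) hi) _

lemma key (D : ℕ) (hD : 2 ≤ D) (k : ℕ) : D * ((k + D - 1)/D) = rho D (k % D) + k := by
  have hD0 : 0 < D := by omega
  set q := k / D with hq
  set s := k % D with hs
  have hsD : s < D := Nat.mod_lt _ hD0
  have hk : k = D * q + s := by rw [hq, hs]; exact (Nat.div_add_mod k D).symm
  rcases Nat.eq_zero_or_pos s with hs0 | hs0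
  · have harg : k + D - 1 = D * q + (D - 1) := by omega
    rw [harg, Nat.mul_add_div hD0, Nat.div_eq_of_lt (by omega), Nat.add_zero, hs0]
    have hrho : rho D 0 = 0 := by simp [rho]
    rw [hrho]
    omega
  · have harg : k + D - 1 = D * (q + 1) + (s - 1) := by
      have : D * (q+1) = D * q + D := by ring
      omega
    rw [harg, Nat.mul_add_div hD0, Nat.div_eq_of_lt (by omega), Nat.add_zero]
    simp only [rho, if_neg (by omega : s ≠ 0)]
    omega

lemma core (D : ℕ) (hD : 2 ≤ D) (f : ℕ → ℝ≥0∞) :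
    ∑' j, f j = ∑ i : Fin (2^(D-1)), ∑' k, f (JJ D i.val k) * ((2:ℝ≥0∞)^(rho D (k % D)))⁻¹ := by
  have hD0 : 0 < D := by omega
  have hE1 : (1:ℕ) ≤ 2^(D-1) := Nat.one_le_two_pow
  have h2D : (2:ℕ)^D = 2^(D-1) + 2^(D-1) := by
    have h : D - 1 + 1 = D := by omega
    calc (2:ℕ)^D = 2^(D-1+1) := by rw [h]
      _ = 2^(D-1) + 2^(D-1) := by rw [pow_succ]; ring
  have hR0 : 0 < 2^D - 1 := by omega
  haveI : NeZero D := ⟨by omega⟩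
  haveI : NeZero (2^D - 1) := ⟨by omega⟩
  -- RHS rewrite
  have hrhs : ∀ i : Fin (2^(D-1)), ∑' k, f (JJ D i.val k) * ((2:ℝ≥0∞)^(rho D (k % D)))⁻¹
      = ∑' c, ∑ s ∈ Finset.range D, f (c * (2^D - 1) + off D s i.val) * ((2:ℝ≥0∞)^(rho D s))⁻¹ := by
    intro i
    rw [← Equiv.tsum_eq (Nat.divModEquiv D).symm
      (fun k => f (JJ D i.val k) * ((2:ℝ≥0∞)^(rho D (k % D)))⁻¹), ENNReal.tsum_prod']
    apply tsum_congr
    intro c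
    rw [tsum_fintype, ← Fin.sum_univ_eq_sum_range
      (fun s => f (c * (2^D - 1) + off D s i.val) * ((2:ℝ≥0∞)^(rho D s))⁻¹)]
    apply Finset.sum_congr rfl
    intro s _
    have he : (Nat.divModEquiv D).symm (c, s) = c * D + s.val := rfl
    have hdiv : (c * D + s.val) / D = c := by
      rw [mul_comm, Nat.mul_add_div hD0, Nat.div_eq_of_lt s.isLt, Nat.add_zero]
    have hmod : (c * D + s.val) % D = s.val := by
      rw [mul_comm, Nat.mul_add_mod, Nat.mod_eq_of_lt s.isLt]
    rw [he]
    unfold JJ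
    rw [hdiv, hmod]
  rw [Finset.sum_congr rfl (fun i _ => hrhs i)]
  rw [← Summable.tsum_finsetSum (fun i _ => ENNReal.summable)]
  -- now: ∑' j, f j = ∑' c, ∑ i : Fin E, ∑ s ∈ range D, ...
  have hc : ∀ c : ℕ, ∑ i : Fin (2^(D-1)), ∑ s ∈ Finset.range D,
      f (c * (2^D - 1) + off D s i.val) * ((2:ℝ≥0∞)^(rho D s))⁻¹
      = ∑ u ∈ Finset.range (2^D - 1), f (c * (2^D - 1) + u) := by
    intro c
    rw [Fin.sum_univ_eq_sum_range (fun i => ∑ s ∈ Finset.range D,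
      f (c * (2^D - 1) + off D s i) * ((2:ℝ≥0∞)^(rho D s))⁻¹)]
    exact starSum D hD (fun u => f (c * (2^D - 1) + u))
  rw [tsum_congr hc]
  rw [← Equiv.tsum_eq (Nat.divModEquiv (2^D - 1)).symm f, ENNReal.tsum_prod']
  apply tsum_congr
  intro c
  rw [tsum_fintype, ← Fin.sum_univ_eq_sum_range (fun u => f (c * (2^D - 1) + u))]
  exact Finset.sum_congr rfl (fun u _ => rfl)


lemma main_aux (D : ℕ) (hD : 2 ≤ D) (nn : ℕ → ℕ) (hnn : StrictMono nn)
    (q : ℕ → Prop) [DecidablePred q] (N : Fin (2^(D-1)) → ℕ∞)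
    (hN : ∀ (i : Fin (2^(D-1))) (k : ℕ), ((k : ℕ∞) < N i ↔ q (JJ D i.val k))) :
    (∀ i : Fin (2^(D-1)), StrictMono (fun k => nn (JJ D i.val k) + (k + D - 1)/D)) ∧
      (∑' j, (if q j then ((2:ℝ≥0∞)^(D * nn j))⁻¹ else 0)).toReal
        = ∑ i : Fin (2^(D-1)), ∑' k : ℕ,
            if (k : ℕ∞) < N i then (2:ℝ)^k * (2:ℝ)^(-((D:ℤ)*((nn (JJ D i.val k) + (k + D - 1)/D : ℕ) : ℤ))) else 0 := by
  refine ⟨?_, ?_⟩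
  · intro i
    apply strictMono_nat_of_lt_succ
    intro k
    have h1 := hnn ((JJ_mono D hD i.isLt) (lt_add_one k))
    have h2 : (k + D - 1)/D ≤ (k + 1 + D - 1)/D := Nat.div_le_div_right (by omega)
    omega
  · set f : ℕ → ℝ≥0∞ := fun j => if q j then ((2:ℝ≥0∞)^(D * nn j))⁻¹ else 0 with hf
    rw [core D hD f]
    have hle : ∀ (i : Fin (2^(D-1))) (k : ℕ),
        f (JJ D i.val k) * ((2:ℝ≥0∞)^(rho D (k % D)))⁻¹ ≤ (2:ℝ≥0∞)⁻¹ ^ k := by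
      intro i k
      have h1 : f (JJ D i.val k) ≤ ((2:ℝ≥0∞)^(D * nn (JJ D i.val k)))⁻¹ := by
        rw [hf]
        dsimp only
        split
        · exact le_rfl
        · exact zero_le
      have h2 : k ≤ D * nn (JJ D i.val k) := by
        have ha : k ≤ JJ D i.val k := (JJ_mono D hD i.isLt).le_apply
        have h3 : JJ D i.val k ≤ nn (JJ D i.val k) := hnn.le_apply
        have h4 : nn (JJ D i.val k) ≤ D * nn (JJ D i.val k) :=
          Nat.le_mul_of_pos_left _ (by omega)
        omega
      have hw : ((2:ℝ≥0∞)^(rho D (k % D)))⁻¹ ≤ 1 := by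
        rw [ENNReal.inv_le_one]
        calc (1:ℝ≥0∞) = 2^0 := (pow_zero 2).symm
          _ ≤ 2^(rho D (k % D)) := pow_le_pow_right₀ one_le_two (Nat.zero_le _)
      calc f (JJ D i.val k) * ((2:ℝ≥0∞)^(rho D (k % D)))⁻¹
          ≤ ((2:ℝ≥0∞)^(D * nn (JJ D i.val k)))⁻¹ * 1 := mul_le_mul' h1 hw
        _ = ((2:ℝ≥0∞)^(D * nn (JJ D i.val k)))⁻¹ := mul_one _
        _ ≤ ((2:ℝ≥0∞)^k)⁻¹ := by
            rw [ENNReal.inv_le_inv]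
            exact pow_le_pow_right₀ one_le_two h2
        _ = (2:ℝ≥0∞)⁻¹ ^ k := by rw [← ENNReal.inv_pow]
    have hpow_ne_top : ∀ k : ℕ, ((2:ℝ≥0∞)⁻¹ ^ k) ≠ ⊤ :=
      fun k => ENNReal.pow_ne_top (by simp)
    have hbnd : ∀ i : Fin (2^(D-1)),
        (∑' k, f (JJ D i.val k) * ((2:ℝ≥0∞)^(rho D (k % D)))⁻¹) ≠ ⊤ := by
      intro i
      have h5 : (∑' k, f (JJ D i.val k) * ((2:ℝ≥0∞)^(rho D (k % D)))⁻¹)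
          ≤ ∑' k : ℕ, (2:ℝ≥0∞)⁻¹ ^ k := ENNReal.tsum_le_tsum (hle i)
      have hg : (∑' k : ℕ, (2:ℝ≥0∞)⁻¹ ^ k) = 2 := by
        rw [ENNReal.tsum_geometric, ENNReal.one_sub_inv_two, inv_inv]
      rw [hg] at h5
      exact ne_top_of_le_ne_top ENNReal.ofNat_ne_top h5
    rw [ENNReal.toReal_sum (fun i _ => hbnd i)]
    apply Finset.sum_congr rfl
    intro i _
    rw [ENNReal.tsum_toReal_eq (fun k => ne_top_of_le_ne_top (hpow_ne_top k) (hle i k))]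
    apply tsum_congr
    intro k
    by_cases hq : q (JJ D i.val k)
    · rw [if_pos ((hN i k).2 hq)]
      have hfv : f (JJ D i.val k) = ((2:ℝ≥0∞)^(D * nn (JJ D i.val k)))⁻¹ := by
        rw [hf]; exact if_pos hq
      have hDm : D * (nn (JJ D i.val k) + (k + D - 1)/D)
          = D * nn (JJ D i.val k) + (rho D (k % D) + k) := by
        rw [Nat.mul_add, key D hD k]
      have hz : (2:ℝ)^(-((D:ℤ)*((nn (JJ D i.val k) + (k + D - 1)/D : ℕ) : ℤ)))
          = ((2:ℝ)^(D * (nn (JJ D i.val k) + (k + D - 1)/D)))⁻¹ := by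
        rw [show (-((D:ℤ)*((nn (JJ D i.val k) + (k + D - 1)/D : ℕ) : ℤ)))
            = -(((D * (nn (JJ D i.val k) + (k + D - 1)/D) : ℕ) : ℤ)) by push_cast; ring,
          zpow_neg, zpow_natCast]
      rw [hfv, hz, hDm, ENNReal.toReal_mul, ENNReal.toReal_inv, ENNReal.toReal_inv,
        ENNReal.toReal_pow, ENNReal.toReal_pow]
      norm_num
      rw [pow_add, pow_add]
      field_simp
    · rw [if_neg (fun hlt => hq ((hN i k).1 hlt))]
      have hfv : f (JJ D i.val k) = 0 := by rw [hf]; exact if_neg hq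
      rw [hfv, zero_mul, ENNReal.toReal_zero]


lemma toReal_term (D a : ℕ) :
    (((2:ℝ≥0∞)^(D*a))⁻¹).toReal = (2:ℝ)^(-((D:ℤ)*(a:ℤ))) := by
  rw [ENNReal.toReal_inv, ENNReal.toReal_pow,
    show (-((D:ℤ)*(a:ℤ))) = -(((D*a:ℕ):ℤ)) by push_cast; ring, zpow_neg, zpow_natCast]
  norm_num

lemma f_ne_top (x : ℝ≥0∞) (c : Prop) [Decidable c] (e : ℕ) (hx : x = if c then ((2:ℝ≥0∞)^e)⁻¹ else 0) :
    x ≠ ⊤ := by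
  rw [hx]
  split
  · exact ENNReal.inv_ne_top.2 (pow_ne_zero _ (by norm_num))
  · exact ENNReal.zero_ne_top


end S10

open Finset ENNReal S10

/-- Every real number `r = Σ_{n ∈ I} 2^{-Dn}` (for `D ≥ 2` and `I ⊆ ℕ`) is a
sum of `2^{D-1}` real numbers, each of the form `Σ_k 2^k·2^{-D·m_k}` for a strictly
increasing sequence `(m_k)` (possibly truncated to a finite, or empty, initial segment,
as recorded by `N i : ℕ∞`). -/
theorem stmt_10 (D : ℕ) (hD : 2 ≤ D) (I : Set ℕ) (r : ℝ)
    (hr : r = ∑' n : I, (2 : ℝ) ^ (-((D : ℤ) * ((n : ℕ) : ℤ)))) :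
    ∃ (N : Fin (2 ^ (D - 1)) → ℕ∞) (m : Fin (2 ^ (D - 1)) → ℕ → ℕ),
      (∀ i, StrictMono (m i)) ∧
      r = ∑ i, ∑' k : ℕ,
        if (k : ℕ∞) < N i then (2 : ℝ) ^ k * (2 : ℝ) ^ (-((D : ℤ) * (m i k : ℤ)))
        else 0 := by
  classical
  set p : ℕ → Prop := fun n => n ∈ I with hp
  rcases Set.finite_or_infinite I with hfin | hinf
  · -- finite case
    have hpfin : (setOf p).Finite := by exact hfin
    set len := hpfin.toFinset.card with hlen
    set nn : ℕ → ℕ := fun j => if j < len then Nat.nth p j else Nat.nth p (len - 1) + 1 + j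
      with hnn_def
    have hnn : StrictMono nn := by
      intro a b hab
      simp only [hnn_def]
      by_cases ha : a < len <;> by_cases hb : b < len
      · rw [if_pos ha, if_pos hb]; exact Nat.nth_lt_nth_of_lt_card hpfin hab hb
      · rw [if_pos ha, if_neg hb]
        have h1 : Nat.nth p a ≤ Nat.nth p (len - 1) := by
          rcases eq_or_lt_of_le (show a ≤ len - 1 by omega) with h | h
          · rw [h]
          · exact le_of_lt (Nat.nth_lt_nth_of_lt_card hpfin h (by show len - 1 < len; omega))
        omega
      · omega
      · rw [if_neg ha, if_neg hb]; omega
    set N : Fin (2^(D-1)) → ℕ∞ :=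
      fun i => (((Finset.range len).filter (fun k => JJ D i.val k < len)).card : ℕ∞) with hN_def
    have hN : ∀ (i : Fin (2^(D-1))) (k : ℕ), ((k : ℕ∞) < N i ↔ JJ D i.val k < len) := by
      intro i k
      rw [hN_def]
      dsimp only
      rw [ENat.coe_lt_coe]
      constructor
      · intro hk
        by_contra hc
        have hsub : (Finset.range len).filter (fun k' => JJ D i.val k' < len)
            ⊆ Finset.range k := by
          intro k' hk'
          simp only [Finset.mem_filter, Finset.mem_range] at hk' ⊢
          by_contra hge
          have hle2 : JJ D i.val k ≤ JJ D i.val k' := (JJ_mono D hD i.isLt).monotone (by omega)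
          omega
        have hcard := Finset.card_le_card hsub
        rw [Finset.card_range] at hcard
        omega
      · intro hlt
        have hsub : Finset.range (k+1)
            ⊆ (Finset.range len).filter (fun k' => JJ D i.val k' < len) := by
          intro k' hk'
          rw [Finset.mem_range] at hk'
          have hmono : JJ D i.val k' ≤ JJ D i.val k := (JJ_mono D hD i.isLt).monotone (by omega)
          have hk'le : k' ≤ JJ D i.val k' := (JJ_mono D hD i.isLt).le_apply
          simp only [Finset.mem_filter, Finset.mem_range]
          omega
        have hcard := Finset.card_le_card hsub
        rw [Finset.card_range] at hcard
        omega
    have haux := main_aux D hD nn hnn (fun j => j < len) N hN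
    refine ⟨N, fun i k => nn (JJ D i.val k) + (k + D - 1)/D, haux.1, ?_⟩
    rw [hr]
    have rident : (∑' n : I, (2 : ℝ) ^ (-((D : ℤ) * ((n : ℕ) : ℤ))))
        = (∑' j, (if j < len then ((2:ℝ≥0∞)^(D * nn j))⁻¹ else 0)).toReal := by
      have hne : ∀ j, (if j < len then ((2:ℝ≥0∞)^(D * nn j))⁻¹ else 0) ≠ ⊤ :=
        fun j => f_ne_top _ _ _ rfl
      rw [ENNReal.tsum_toReal_eq hne]
      have hvanish : ∀ j ∉ Finset.range len,
          ((if j < len then ((2:ℝ≥0∞)^(D * nn j))⁻¹ else 0)).toReal = 0 := by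
        intro j hj
        rw [Finset.mem_range] at hj
        rw [if_neg hj, ENNReal.toReal_zero]
      rw [tsum_eq_sum hvanish]
      have hIco : (↑hpfin.toFinset : Set ℕ) = I := by
        rw [Set.Finite.coe_toFinset]; rfl
      rw [← hIco, Finset.tsum_subtype' hpfin.toFinset (fun n => (2 : ℝ) ^ (-((D : ℤ) * ((n : ℕ) : ℤ))))]
      refine Finset.sum_bij' (fun x _ => Nat.count p x) (fun j _ => Nat.nth p j) ?_ ?_ ?_ ?_ ?_
      · intro x hx
        rw [Set.Finite.mem_toFinset] at hx
        rw [Finset.mem_range]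
        exact Nat.count_lt_card hpfin hx
      · intro j hj
        rw [Finset.mem_range] at hj
        rw [Set.Finite.mem_toFinset]
        exact Nat.nth_mem_of_lt_card hpfin hj
      · intro x hx
        rw [Set.Finite.mem_toFinset] at hx
        exact Nat.nth_count hx
      · intro j hj
        rw [Finset.mem_range] at hj
        exact Nat.count_nth_of_lt_card_finite hpfin hj
      · intro x hx
        have hc : Nat.count p x < len := by
          rw [Set.Finite.mem_toFinset] at hx
          exact Nat.count_lt_card hpfin hx
        rw [if_pos hc, toReal_term]
        have hnnc : nn (Nat.count p x) = Nat.nth p (Nat.count p x) := by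
          rw [hnn_def]; exact if_pos hc
        rw [hnnc, Nat.nth_count (by rw [Set.Finite.mem_toFinset] at hx; exact hx)]
    rw [rident]
    exact haux.2
  · -- infinite case
    have hpinf : (setOf p).Infinite := by exact hinf
    have hnn : StrictMono (Nat.nth p) := Nat.nth_strictMono hpinf
    have hN : ∀ (i : Fin (2^(D-1))) (k : ℕ), ((k : ℕ∞) < (⊤:ℕ∞) ↔ True) :=
      fun i k => iff_of_true (ENat.coe_lt_top k) trivial
    have haux := main_aux D hD (Nat.nth p) hnn (fun _ => True) (fun _ => ⊤) hN
    refine ⟨fun _ => ⊤, fun i k => Nat.nth p (JJ D i.val k) + (k + D - 1)/D, haux.1, ?_⟩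
    rw [hr]
    have hbij : Function.Bijective
        (fun j => (⟨Nat.nth p j, Nat.nth_mem_of_infinite hpinf j⟩ : I)) := by
      constructor
      · intro a b hab
        exact Nat.nth_injective hpinf (congrArg Subtype.val hab)
      · rintro ⟨x, hx⟩
        have : x ∈ Set.range (Nat.nth p) := by
          rw [Nat.range_nth_of_infinite hpinf]
          exact hx
        obtain ⟨j, hj⟩ := this
        exact ⟨j, Subtype.ext hj⟩
    have rident : (∑' n : I, (2 : ℝ) ^ (-((D : ℤ) * ((n : ℕ) : ℤ))))
        = (∑' j, (if True then ((2:ℝ≥0∞)^(D * Nat.nth p j))⁻¹ else 0)).toReal := by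
      have hne : ∀ j, (if True then ((2:ℝ≥0∞)^(D * Nat.nth p j))⁻¹ else 0) ≠ ⊤ :=
        fun j => f_ne_top _ _ _ rfl
      rw [ENNReal.tsum_toReal_eq hne]
      have hterm : ∀ j : ℕ,
          ((if True then ((2:ℝ≥0∞)^(D * Nat.nth p j))⁻¹ else 0)).toReal
          = (2:ℝ)^(-((D:ℤ)*((Nat.nth p j):ℤ))) := by
        intro j
        rw [if_pos trivial, toReal_term]
      rw [tsum_congr hterm]
      exact (Equiv.tsum_eq (Equiv.ofBijective _ hbij)
        (fun n : I => (2 : ℝ) ^ (-((D : ℤ) * ((n : ℕ) : ℤ))))).symm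
    rw [rident]
    exact haux.2
end

section
/- Let Γ be a group in which s₁ has infinite order, F ⊆ {s₁^k : k ∈ ℤ} finite, and Λ ≤ Γ a subgroup. Suppose B ⊆ Γ is horizontally connected, i.e. for every g ∈ Γ the set {k ∈ ℤ : g s₁^k ∈ B} is an interval of ℤ. Then B has the extension property relative to (F, Λ): every ψ : B → ℤ/2 with ψ(gF) = ψ(gtF) whenever gF ∪ gtF ⊆ B (g ∈ Γ, t ∈ Λ) extends to some χ : Γ → ℤ/2 with χ(gF) = χ(gtF) for all g ∈ Γ, t ∈ Λ. -/
/-!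
Zorn's lemma, applied to compatible partial functions whose domain contains `B` and is
horizontally connected. A maximal one is total: if its domain `C` misses a point, it also misses
a point `y` at an end of an interval of `C` in an `⟨s⟩`-coset, so `C ∪ {y}` stays horizontally
connected. Since `F ⊆ ⟨s⟩` and the slice of `C` through `y` is an interval avoiding `y`, at most
one translate `gF ⊆ C ∪ {y}` contains `y`. The value at `y` is thus pinned down by the single
equation `χ(gF) = χ(uF)` with `u ∈ gΛ`, `uF ⊆ C`, and compatibility on `C` makes all such `u` agree.
-/

open Set Function Pointwise

/-- A function on the subset `dom`; the values of `toFun` off `dom` are ignored. -/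
structure PartialMap (α M : Type*) where
  dom : Set α
  toFun : α → M

namespace PartialMap

variable {α M : Type*}

instance : Preorder (PartialMap α M) where
  le p q := p.dom ⊆ q.dom ∧ EqOn p.toFun q.toFun p.dom
  le_refl p := ⟨subset_rfl, eqOn_refl _ _⟩
  le_trans _ _ _ hpq hqr := ⟨hpq.1.trans hqr.1, hpq.2.trans (hqr.2.mono hpq.1)⟩

theorem le_insert_update [DecidableEq α] (p : PartialMap α M) {x : α} (hx : x ∉ p.dom) (v : M) :
    p ≤ ⟨insert x p.dom, update p.toFun x v⟩ :=
  ⟨subset_insert x p.dom, fun _ hy => (update_of_ne (ne_of_mem_of_not_mem hy hx) v p.toFun).symm⟩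

theorem exists_forall_le_of_isChain {c : Set (PartialMap α M)} (hc : IsChain (· ≤ ·) c)
    (hne : c.Nonempty) : ∃ u : PartialMap α M, u.dom = ⋃ p ∈ c, p.dom ∧ ∀ p ∈ c, p ≤ u := by
  classical
  refine ⟨⟨⋃ p ∈ c, p.dom, fun z =>
    if h : ∃ p ∈ c, z ∈ p.dom then h.choose.toFun z else hne.some.toFun z⟩, rfl,
    fun p hp => ⟨subset_biUnion_of_mem hp, fun z hz => ?_⟩⟩
  have h : ∃ p ∈ c, z ∈ p.dom := ⟨p, hp, hz⟩
  obtain ⟨hq, hzq⟩ := h.choose_spec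
  simp only [dif_pos h]
  rcases hc.total hp hq with hpq | hqp
  · exact hpq.2 hz
  · exact (hqp.2 hzq).symm

theorem exists_mem_subset_dom {c : Set (PartialMap α M)} (hc : IsChain (· ≤ ·) c)
    (hne : c.Nonempty) {T : Set α} (hT : T.Finite) (hTc : T ⊆ ⋃ p ∈ c, p.dom) :
    ∃ p ∈ c, T ⊆ p.dom := by
  lift T to Finset α using hT
  exact hc.directedOn.mono (fun _ _ h => h.1) |>.exists_mem_subset_of_finset_subset_biUnion hne hTc

theorem exists_le_dom_eq_univ {P : PartialMap α M → Prop}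
    (hchain : ∀ c : Set (PartialMap α M), (∀ p ∈ c, P p) → IsChain (· ≤ ·) c → c.Nonempty →
      ∀ u : PartialMap α M, u.dom = ⋃ p ∈ c, p.dom → (∀ p ∈ c, p ≤ u) → P u)
    (hext : ∀ p, P p → p.dom ≠ univ → ∃ q, P q ∧ p ≤ q ∧ ¬q.dom ⊆ p.dom)
    {p₀ : PartialMap α M} (h₀ : P p₀) : ∃ q, P q ∧ p₀ ≤ q ∧ q.dom = univ := by
  obtain ⟨m, hm₀, hm⟩ := zorn_le_nonempty₀ {p | P p} (fun c hcP hc y hy => by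
    obtain ⟨u, hu, hcu⟩ := exists_forall_le_of_isChain hc ⟨y, hy⟩
    exact ⟨u, hchain c hcP hc ⟨y, hy⟩ u hu hcu, hcu⟩) p₀ h₀
  refine ⟨m, hm.prop, hm₀, by_contra fun hne => ?_⟩
  obtain ⟨q, hq, hmq, hqm⟩ := hext m hm.prop hne
  exact hqm (hm.2 hq hmq).1

end PartialMap

theorem Set.OrdConnected.insert_of_uIcc_subset {α : Type*} [LinearOrder α] {J : Set α}
    (hJ : J.OrdConnected) {i j : α} (hi : i ∈ J) (hij : uIcc i j ⊆ insert j J) :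
    (insert j J).OrdConnected := by
  refine (ordConnected_iff_uIcc_subset_left (mem_insert_of_mem j hi)).2 ?_
  rintro y (rfl | hy)
  exacts [hij, (hJ.uIcc_subset hi hy).trans (subset_insert j J)]

theorem Int.exists_notMem_ordConnected_insert {J : Set ℤ} (hJ : J.OrdConnected)
    (hne : J ≠ univ) : ∃ j ∉ J, (insert j J).OrdConnected := by
  classical
  rcases J.eq_empty_or_nonempty with rfl | ⟨a, ha⟩
  · exact ⟨0, notMem_empty 0, by simpa using ordConnected_singleton⟩
  obtain ⟨b, hb⟩ := (ne_univ_iff_exists_notMem J).1 hne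
  suffices ∃ j ∉ J, ∃ i ∈ J, i = j + 1 ∨ i = j - 1 by
    obtain ⟨j, hj, i, hi, hij⟩ := this
    refine ⟨j, hj, hJ.insert_of_uIcc_subset hi fun z hz => ?_⟩
    rw [mem_uIcc] at hz
    obtain rfl | rfl : z = j ∨ z = i := by omega
    exacts [mem_insert _ _, mem_insert_of_mem _ hi]
  rcases lt_or_gt_of_ne (ne_of_mem_of_not_mem ha hb) with hab | hba
  · obtain ⟨m, ⟨hmJ, hmb⟩, hmax⟩ := Int.exists_greatest_of_bdd (P := fun k => k ∈ J ∧ k ≤ b)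
      ⟨b, fun _ h => h.2⟩ ⟨a, ha, hab.le⟩
    have hmb' : m < b := lt_of_le_of_ne hmb (ne_of_mem_of_not_mem hmJ hb)
    exact ⟨m + 1, fun h => by have := hmax _ ⟨h, hmb'⟩; omega, m, hmJ, by omega⟩
  · obtain ⟨m, ⟨hmJ, hbm⟩, hmin⟩ := Int.exists_least_of_bdd (P := fun k => k ∈ J ∧ b ≤ k)
      ⟨b, fun _ h => h.2⟩ ⟨a, ha, hba.le⟩
    have hbm' : b < m := lt_of_le_of_ne hbm (ne_of_mem_of_not_mem hmJ hb).symm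
    exact ⟨m - 1, fun h => by have := hmin _ ⟨h, by omega⟩; omega, m, hmJ, by omega⟩

section Horizontal

variable {Γ : Type*} [Group Γ]

def IsHorizontallyConnected (s : Γ) (C : Set Γ) : Prop :=
  ∀ g : Γ, {k : ℤ | g * s ^ k ∈ C}.OrdConnected

variable {s : Γ} {C : Set Γ} {x : Γ}

theorem IsHorizontallyConnected.exists_insert (hs : ¬IsOfFinOrder s)
    (hC : IsHorizontallyConnected s C) (hx : x ∉ C) :
    ∃ y ∉ C, IsHorizontallyConnected s (insert y C) := by
  have hinj := injective_zpow_iff_not_isOfFinOrder.2 hs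
  obtain ⟨j, hj, hJj⟩ := Int.exists_notMem_ordConnected_insert (hC x)
    ((ne_univ_iff_exists_notMem _).2 ⟨0, by simpa using hx⟩)
  refine ⟨x * s ^ j, hj, fun g => ?_⟩
  by_cases hg : ∃ c : ℤ, g = x * s ^ c
  · obtain ⟨c, rfl⟩ := hg
    convert hJj.preimage_mono (monotone_id.const_add c) using 1
    ext k
    simp [mul_assoc, ← zpow_add, hinj.eq_iff]
  · convert hC g using 1
    ext k
    refine mem_insert_iff.trans (or_iff_right fun h => hg ⟨j - k, ?_⟩)
    rw [zpow_sub, ← mul_assoc, ← h]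
    group

theorem IsHorizontallyConnected.biUnion_of_isChain {M : Type*} {c : Set (PartialMap Γ M)}
    (hc : IsChain (· ≤ ·) c) (hne : c.Nonempty) (h : ∀ p ∈ c, IsHorizontallyConnected s p.dom) :
    IsHorizontallyConnected s (⋃ p ∈ c, p.dom) := by
  refine fun g => ⟨fun a ha b hb k hk => ?_⟩
  obtain ⟨p, hp, hab⟩ := PartialMap.exists_mem_subset_dom hc hne
    ((finite_singleton (g * s ^ b)).insert (g * s ^ a))
    (insert_subset ha (singleton_subset_iff.2 hb))
  exact mem_biUnion hp ((h p hp g).out (hab (mem_insert _ _)) (hab (mem_insert_of_mem _ rfl)) hk)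

theorem IsHorizontallyConnected.eq_of_mem_smul_of_smul_subset_insert (hs : ¬IsOfFinOrder s)
    {S : Set Γ} (hS : S ⊆ Subgroup.zpowers s) (hC : IsHorizontallyConnected s C) (hx : x ∉ C)
    {g₁ g₂ : Γ} (h₁ : g₁ • S ⊆ insert x C) (hx₁ : x ∈ g₁ • S)
    (h₂ : g₂ • S ⊆ insert x C) (hx₂ : x ∈ g₂ • S) : g₁ = g₂ := by
  have hinj := injective_zpow_iff_not_isOfFinOrder.2 hs
  have hpow : ∀ {y}, y ∈ S → ∃ k : ℤ, s ^ k = y := fun hy => Subgroup.mem_zpowers_iff.1 (hS hy)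
  obtain ⟨_, ha, rfl⟩ := hx₁
  obtain ⟨a, rfl⟩ := hpow ha
  obtain ⟨_, hb, hab⟩ := hx₂
  obtain ⟨b, rfl⟩ := hpow hb
  have key : ∀ {g : Γ} {k m : ℤ}, g • S ⊆ insert (g₁ * s ^ a) C → g * s ^ k = g₁ * s ^ a →
      s ^ m ∈ S → m ≠ k → m - k ∈ {j : ℤ | g₁ * s ^ a * s ^ j ∈ C} := by
    intro g k m hg hk hm hmk
    have hmem : g₁ * s ^ a * s ^ (m - k) = g * s ^ m := by
      rw [← hk, mul_assoc, ← zpow_add, add_sub_cancel]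
    refine (hg ⟨_, hm, hmem.symm⟩).resolve_left fun h => hmk ?_
    exact sub_eq_zero.1 (hinj (by simpa using h))
  by_contra hne
  have hba : b ≠ a := fun h => hne (by simpa [h] using hab.symm)
  have h0 := (hC _).uIcc_subset (key h₁ rfl hb hba) (key h₂ hab ha hba.symm)
    (show (0 : ℤ) ∈ uIcc (b - a) (a - b) from mem_uIcc.2 (by omega))
  exact hx (by simpa using h0)

end Horizontal

section Compatible

variable {Γ M : Type*} [Group Γ] {F : Finset Γ} {Λ : Subgroup Γ} {s : Γ} {C : Set Γ}

def IsCompatibleOn [AddCommMonoid M] (F : Finset Γ) (Λ : Subgroup Γ) (C : Set Γ) (φ : Γ → M) :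
    Prop :=
  ∀ g g' : Γ, (g : Γ ⧸ Λ) = g' → g • (F : Set Γ) ⊆ C → g' • (F : Set Γ) ⊆ C →
    ∑ h ∈ F, φ (g * h) = ∑ h ∈ F, φ (g' * h)

theorem IsCompatibleOn.of_isChain [AddCommMonoid M] {c : Set (PartialMap Γ M)}
    (hc : IsChain (· ≤ ·) c) (hne : c.Nonempty) (h : ∀ p ∈ c, IsCompatibleOn F Λ p.dom p.toFun)
    {u : PartialMap Γ M} (hu : u.dom = ⋃ p ∈ c, p.dom) (hcu : ∀ p ∈ c, p ≤ u) :
    IsCompatibleOn F Λ u.dom u.toFun := by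
  intro g g' hgg' hg hg'
  obtain ⟨p, hp, hsub⟩ := PartialMap.exists_mem_subset_dom hc hne
    (F.finite_toSet.smul_set.union F.finite_toSet.smul_set) (hu ▸ union_subset hg hg')
  have hpu {g : Γ} (hg : g • (F : Set Γ) ⊆ p.dom) :
      ∑ h ∈ F, u.toFun (g * h) = ∑ h ∈ F, p.toFun (g * h) :=
    Finset.sum_congr rfl fun h hh => ((hcu p hp).2 (hg ⟨h, hh, rfl⟩)).symm
  rw [hpu (subset_union_left.trans hsub), hpu (subset_union_right.trans hsub)]
  exact h p hp g g' hgg' (subset_union_left.trans hsub) (subset_union_right.trans hsub)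

section Update

variable [DecidableEq Γ] {φ : Γ → M} {x g : Γ}

theorem sum_update_mul_of_notMem [AddCommMonoid M] (hx : x ∉ g • (F : Set Γ)) (v : M) :
    ∑ h ∈ F, update φ x v (g * h) = ∑ h ∈ F, φ (g * h) :=
  Finset.sum_congr rfl fun h hh => update_of_ne (fun e => hx ⟨h, hh, e⟩) v φ

theorem exists_sum_update_mul_eq [AddCommGroup M] (hx : x ∈ g • (F : Set Γ)) (a : M) :
    ∃ v, ∑ h ∈ F, update φ x v (g * h) = a := by
  obtain ⟨h₀, hh₀, rfl⟩ := Set.mem_smul_set.1 hx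
  rw [smul_eq_mul]
  refine ⟨a - ∑ h ∈ F.erase h₀, φ (g * h), ?_⟩
  rw [← Finset.add_sum_erase _ _ hh₀, update_self]
  rw [Finset.sum_congr rfl fun h hh =>
    update_of_ne (fun e => Finset.ne_of_mem_erase hh (mul_left_cancel e)) _ φ]
  exact sub_add_cancel _ _

theorem IsCompatibleOn.exists_update [AddCommGroup M] (hs : ¬IsOfFinOrder s)
    (hF : (F : Set Γ) ⊆ Subgroup.zpowers s) (hC : IsHorizontallyConnected s C)
    (hφ : IsCompatibleOn F Λ C φ) (hx : x ∉ C) :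
    ∃ v, IsCompatibleOn F Λ (insert x C) (update φ x v) := by
  have huniq {g₁ g₂ : Γ} := hC.eq_of_mem_smul_of_smul_subset_insert hs hF hx (g₁ := g₁) (g₂ := g₂)
  have hoff {g : Γ} (hg : g • (F : Set Γ) ⊆ insert x C) (hxg : x ∉ g • (F : Set Γ)) :
      g • (F : Set Γ) ⊆ C :=
    (subset_insert_iff_of_notMem hxg).1 hg
  obtain ⟨v, hv⟩ : ∃ v, ∀ g u : Γ, (g : Γ ⧸ Λ) = u → g • (F : Set Γ) ⊆ insert x C →
      x ∈ g • (F : Set Γ) → u • (F : Set Γ) ⊆ C →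
      ∑ h ∈ F, update φ x v (g * h) = ∑ h ∈ F, φ (u * h) := by
    by_cases hex : ∃ g₀ u₀ : Γ, (g₀ : Γ ⧸ Λ) = u₀ ∧ g₀ • (F : Set Γ) ⊆ insert x C ∧
        x ∈ g₀ • (F : Set Γ) ∧ u₀ • (F : Set Γ) ⊆ C
    · obtain ⟨g₀, u₀, hgu₀, hg₀, hxg₀, hu₀⟩ := hex
      obtain ⟨v, hv⟩ := exists_sum_update_mul_eq hxg₀ (∑ h ∈ F, φ (u₀ * h))
      refine ⟨v, fun g u hgu hg hxg hu => ?_⟩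
      obtain rfl := huniq hg hxg hg₀ hxg₀
      rw [hv]
      exact hφ u₀ u (hgu₀.symm.trans hgu) hu₀ hu
    · exact ⟨0, fun g u hgu hg hxg hu => (hex ⟨g, u, hgu, hg, hxg, hu⟩).elim⟩
  refine ⟨v, fun g g' hgg' hg hg' => ?_⟩
  by_cases hxg : x ∈ g • (F : Set Γ) <;> by_cases hxg' : x ∈ g' • (F : Set Γ)
  · rw [huniq hg hxg hg' hxg']
  · rw [hv g g' hgg' hg hxg (hoff hg' hxg'), sum_update_mul_of_notMem hxg']
  · rw [hv g' g hgg'.symm hg' hxg' (hoff hg hxg), sum_update_mul_of_notMem hxg]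
  · rw [sum_update_mul_of_notMem hxg, sum_update_mul_of_notMem hxg']
    exact hφ g g' hgg' (hoff hg hxg) (hoff hg' hxg')

end Update

theorem IsCompatibleOn.exists_extension [AddCommGroup M] (hs : ¬IsOfFinOrder s)
    (hF : (F : Set Γ) ⊆ Subgroup.zpowers s) {B : Set Γ} {ψ : Γ → M}
    (hB : IsHorizontallyConnected s B) (hψ : IsCompatibleOn F Λ B ψ) :
    ∃ χ : Γ → M, EqOn χ ψ B ∧ IsCompatibleOn F Λ univ χ := by
  classical
  obtain ⟨q, ⟨-, hq⟩, hle, hdom⟩ := PartialMap.exists_le_dom_eq_univ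
    (P := fun p : PartialMap Γ M =>
      IsHorizontallyConnected s p.dom ∧ IsCompatibleOn F Λ p.dom p.toFun)
    (fun c hcP hc hne u hu hcu =>
      ⟨hu ▸ IsHorizontallyConnected.biUnion_of_isChain hc hne fun p hp => (hcP p hp).1,
        IsCompatibleOn.of_isChain hc hne (fun p hp => (hcP p hp).2) hu hcu⟩)
    (fun p ⟨hC, hφ⟩ hne => by
      obtain ⟨x, hx⟩ := (ne_univ_iff_exists_notMem _).1 hne
      obtain ⟨y, hy, hCy⟩ := hC.exists_insert hs hx
      obtain ⟨v, hv⟩ := hφ.exists_update hs hF hC hy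
      exact ⟨⟨insert y p.dom, update p.toFun y v⟩, ⟨hCy, hv⟩, p.le_insert_update hy v,
        fun h => hy (h (mem_insert y _))⟩)
    (p₀ := ⟨B, ψ⟩) ⟨hB, hψ⟩
  exact ⟨q.toFun, fun b hb => (hle.2 hb).symm, hdom ▸ hq⟩

end Compatible

theorem stmt_14_general {Γ : Type*} [Group Γ] (s₁ : Γ)
    (hs₁ : ∀ k : ℤ, s₁ ^ k = 1 → k = 0)
    (F : Finset Γ) (hF : ∀ h ∈ F, ∃ k : ℤ, h = s₁ ^ k)
    (Λ : Subgroup Γ) (B : Set Γ)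
    (hB : ∀ (g : Γ) (k₁ k₂ k₃ : ℤ), k₁ ≤ k₂ → k₂ ≤ k₃ →
      g * s₁ ^ k₁ ∈ B → g * s₁ ^ k₃ ∈ B → g * s₁ ^ k₂ ∈ B)
    (ψ : Γ → ZMod 2)
    (hψ : ∀ (g : Γ), ∀ t ∈ Λ,
      (∀ h ∈ F, g * h ∈ B) → (∀ h ∈ F, g * t * h ∈ B) →
      ∑ h ∈ F, ψ (g * h) = ∑ h ∈ F, ψ (g * t * h)) :
    ∃ χ : Γ → ZMod 2, (∀ b ∈ B, χ b = ψ b) ∧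
      ∀ (g : Γ), ∀ t ∈ Λ, ∑ h ∈ F, χ (g * h) = ∑ h ∈ F, χ (g * t * h) := by
  have hs : ¬IsOfFinOrder s₁ := fun h => by
    obtain ⟨k, hk, hk1⟩ := isOfFinOrder_iff_zpow_eq_one.1 h
    exact hk (hs₁ k hk1)
  have hFs : (F : Set Γ) ⊆ Subgroup.zpowers s₁ := fun h hh => by
    obtain ⟨k, rfl⟩ := hF h hh
    exact Subgroup.zpow_mem_zpowers s₁ k
  have hψc : IsCompatibleOn F Λ B ψ := by
    intro g g' hgg' hg hg'
    obtain ⟨t, ht, rfl⟩ : ∃ t ∈ Λ, g * t = g' :=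
      ⟨g⁻¹ * g', QuotientGroup.eq.1 hgg', mul_inv_cancel_left g g'⟩
    exact hψ g t ht (smul_set_subset_iff.1 hg) (smul_set_subset_iff.1 hg')
  obtain ⟨χ, hχB, hχ⟩ := hψc.exists_extension hs hFs
    (fun g => ⟨fun k₁ h₁ k₃ h₃ k₂ hk => hB g k₁ k₂ k₃ hk.1 hk.2 h₁ h₃⟩)
  refine ⟨χ, hχB, fun g t ht => hχ g (g * t) ?_ (subset_univ _) (subset_univ _)⟩
  simpa [QuotientGroup.eq] using ht

/-- Extension lemma: if `s₁ ∈ Γ` has infinite order, `F` is a finite subset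
of the cyclic subgroup generated by `s₁`, `Λ ≤ Γ` is a subgroup and `B ⊆ Γ` is horizontally
connected, then every `ψ : B → ℤ/2` satisfying the compatibility conditions
`ψ(gF) = ψ(gtF)` whenever `gF ∪ gtF ⊆ B` extends to `χ : Γ → ℤ/2` satisfying
`χ(gF) = χ(gtF)` for all `g ∈ Γ`, `t ∈ Λ`. -/
theorem stmt_14 {Γ : Type*} [Group Γ] [Countable Γ] (s₁ : Γ)
    (hs₁ : ∀ k : ℤ, s₁ ^ k = 1 → k = 0)
    (F : Finset Γ) (hF : ∀ h ∈ F, ∃ k : ℤ, h = s₁ ^ k)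
    (Λ : Subgroup Γ) (B : Set Γ)
    (hB : ∀ (g : Γ) (k₁ k₂ k₃ : ℤ), k₁ ≤ k₂ → k₂ ≤ k₃ →
      g * s₁ ^ k₁ ∈ B → g * s₁ ^ k₃ ∈ B → g * s₁ ^ k₂ ∈ B)
    (ψ : Γ → ZMod 2)
    (hψ : ∀ (g : Γ), ∀ t ∈ Λ,
      (∀ h ∈ F, g * h ∈ B) → (∀ h ∈ F, g * t * h ∈ B) →
      ∑ h ∈ F, ψ (g * h) = ∑ h ∈ F, ψ (g * t * h)) :
    ∃ χ : Γ → ZMod 2, (∀ b ∈ B, χ b = ψ b) ∧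
      ∀ (g : Γ), ∀ t ∈ Λ, ∑ h ∈ F, χ (g * h) = ∑ h ∈ F, χ (g * t * h) :=
  stmt_14_general s₁ hs₁ F hF Λ B hB ψ hψ
end

section
/- Let Γ be the free group on s₁, s₂ or Γ = ℤ≀ℤ, I ⊆ ℕ, t_k = s₂^k s₁ s₂^{-k}, Λ_I = ⟨t_k : k ∈ I⟩. Let P = {g s₂^{-n}, …, g s₂^{-1}, g, g s₁, g s₁ s₂^{-1}, …, g s₁ s₂^{-m}} be a hook with n, m ≥ 1 finite. Then for distinct x, y ∈ P and t ∈ Λ_I, the relation x·t = y holds if and only if t = t_k^{±1} for some k ∈ I with k ≤ n and k ≤ m, and {x, y} = {g s₂^{-k}, g s₁ s₂^{-k}} (matched in the order determined by the sign of the exponent). -/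
open scoped commutatorElement

/-- The relations of `ℤ ≀ ℤ = ⟨s₁, s₂ | [s₂^k s₁ s₂^{-k}, s₁] = 1, k ∈ ℤ⟩`, with
`s₁ = FreeGroup.of false` and `s₂ = FreeGroup.of true`. -/
def wreathRels : Set (FreeGroup Bool) :=
  {r | ∃ k : ℤ,
    r = ⁅(FreeGroup.of true) ^ k * FreeGroup.of false * (FreeGroup.of true) ^ (-k),
        FreeGroup.of false⁆}

/-- `Γ` is free on the two generators `s₁, s₂`. -/
def IsFreeOn {Γ : Type*} [Group Γ] (s₁ s₂ : Γ) : Prop :=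
  ∃ e : FreeGroup Bool ≃* Γ, e (FreeGroup.of false) = s₁ ∧ e (FreeGroup.of true) = s₂

/-- `Γ` is `ℤ ≀ ℤ` with distinguished generators `s₁, s₂`. -/
def IsZwrZ {Γ : Type*} [Group Γ] (s₁ s₂ : Γ) : Prop :=
  ∃ e : PresentedGroup wreathRels ≃* Γ,
    e (PresentedGroup.of false) = s₁ ∧ e (PresentedGroup.of true) = s₂

/-!
The exponent sum in `s₂` is a homomorphism to `ℤ` that kills `Λ_I`, so `x * τ = y` puts `x` and
`y` at the same depth `k` of the hook, hence on different legs, and then `τ = x⁻¹ * y = t_k^{±1}`.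
That `t_k ∈ Λ_I` forces `k ∈ I` is read off the lamplighter action of `ℤ ≀ ℤ` on `ℤ × ℤ`:
`t_k` increments the second coordinate exactly at first coordinate `k`, so for `k ∉ I` every
generator of `Λ_I` fixes `(k, 0)` while `t_k` does not. Both homomorphisms are defined on `ℤ ≀ ℤ`,
hence on the free group.
-/

open Equiv

section Quotients

variable {Γ : Type*} [Group Γ] {s₁ s₂ : Γ}

lemma IsFreeOn.exists_monoidHom (h : IsFreeOn s₁ s₂) {G : Type*} [Group G] (a b : G) :
    ∃ φ : Γ →* G, φ s₁ = a ∧ φ s₂ = b := by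
  obtain ⟨e, rfl, rfl⟩ := h
  exact ⟨(FreeGroup.lift fun i => bif i then b else a).comp e.symm.toMonoidHom, by simp, by simp⟩

lemma IsZwrZ.exists_monoidHom (h : IsZwrZ s₁ s₂) {G : Type*} [Group G] (a b : G)
    (hab : ∀ k : ℤ, Commute (b ^ k * a * b ^ (-k)) a) :
    ∃ φ : Γ →* G, φ s₁ = a ∧ φ s₂ = b := by
  obtain ⟨e, rfl, rfl⟩ := h
  have hrels : ∀ r ∈ wreathRels, FreeGroup.lift (fun i => bif i then b else a) r = 1 := by
    rintro _ ⟨k, rfl⟩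
    simpa [commutatorElement_eq_one_iff_mul_comm] using (hab k).eq
  exact ⟨(PresentedGroup.toGroup hrels).comp e.symm.toMonoidHom,
    by simp [PresentedGroup.toGroup.of], by simp [PresentedGroup.toGroup.of]⟩

lemma exists_monoidHom_of_commute (hΓ : IsFreeOn s₁ s₂ ∨ IsZwrZ s₁ s₂) {G : Type*} [Group G]
    (a b : G) (hab : ∀ k : ℤ, Commute (b ^ k * a * b ^ (-k)) a) :
    ∃ φ : Γ →* G, φ s₁ = a ∧ φ s₂ = b :=
  hΓ.elim (fun h => h.exists_monoidHom a b) (fun h => h.exists_monoidHom a b hab)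

end Quotients

namespace Lamplighter

def lamp (k : ℤ) : Perm (ℤ × ℤ) where
  toFun q := (q.1, q.2 + if q.1 = k then 1 else 0)
  invFun q := (q.1, q.2 - if q.1 = k then 1 else 0)
  left_inv q := by simp
  right_inv q := by simp

lemma lamp_apply (k : ℤ) (q : ℤ × ℤ) : lamp k q = (q.1, q.2 + if q.1 = k then 1 else 0) := rfl

def shift : Perm (ℤ × ℤ) := Equiv.addRight (1, 0)

lemma shift_zpow_mul_lamp_mul (k : ℤ) : shift ^ k * lamp 0 * shift ^ (-k) = lamp k := by
  ext q <;> simp [shift, lamp_apply, ← sub_eq_add_neg, sub_eq_zero]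

lemma commute_lamp (j k : ℤ) : Commute (lamp j) (lamp k) :=
  Equiv.ext fun q => by simp [lamp_apply, add_right_comm]

end Lamplighter

section Hook

open Lamplighter

variable {Γ : Type*} [Group Γ] {s₁ s₂ : Γ} {t : ℕ → Γ}

variable (s₁ s₂) in
def hook (g : Γ) (n m : ℕ) : Set Γ :=
  (fun i : ℕ => g * s₂ ^ (-(i : ℤ))) '' {i | i ≤ n} ∪
    (fun j : ℕ => g * s₁ * s₂ ^ (-(j : ℤ))) '' {j | j ≤ m}

lemma mem_of_mem_closure_conj (ρ : Γ →* Perm (ℤ × ℤ)) (hρ₁ : ρ s₁ = lamp 0) (hρ₂ : ρ s₂ = shift)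
    (ht : ∀ k, t k = s₂ ^ k * s₁ * s₂ ^ (-(k : ℤ))) {I : Set ℕ} {i : ℕ}
    (hi : t i ∈ Subgroup.closure {x | ∃ k ∈ I, x = t k}) : i ∈ I := by
  have hρt (k : ℕ) : ρ (t k) = lamp k := by
    rw [ht, ← zpow_natCast, map_mul, map_mul, map_zpow, map_zpow, hρ₁, hρ₂,
      shift_zpow_mul_lamp_mul]
  by_contra hiI
  have hle : Subgroup.closure {x | ∃ k ∈ I, x = t k} ≤
      (MulAction.stabilizer (Perm (ℤ × ℤ)) ((i : ℤ), (0 : ℤ))).comap ρ := by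
    rw [Subgroup.closure_le]
    rintro _ ⟨k, hk, rfl⟩
    have hki : (i : ℤ) ≠ k := by exact_mod_cast fun h : i = k => hiI (h ▸ hk)
    simp [hρt, Perm.smul_def, lamp_apply, hki]
  simpa [hρt, Perm.smul_def, lamp_apply] using hle hi

lemma closure_le_ker {G : Type*} [CommGroup G] (ν : Γ →* G) (hν₁ : ν s₁ = 1)
    (ht : ∀ k, t k = s₂ ^ k * s₁ * s₂ ^ (-(k : ℤ))) (I : Set ℕ) :
    Subgroup.closure {x | ∃ k ∈ I, x = t k} ≤ ν.ker := by
  rw [Subgroup.closure_le]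
  rintro _ ⟨k, -, rfl⟩
  simp [ht, hν₁]

lemma inv_mul_eq_conj (ht : ∀ k, t k = s₂ ^ k * s₁ * s₂ ^ (-(k : ℤ))) (g : Γ) (k : ℕ) :
    (g * s₂ ^ (-(k : ℤ)))⁻¹ * (g * s₁ * s₂ ^ (-(k : ℤ))) = t k := by
  rw [ht, ← zpow_natCast]
  group

lemma hook_mul_eq_iff (ν : Γ →* Multiplicative ℤ) (hν₁ : ν s₁ = 1)
    (hν₂ : ν s₂ = .ofAdd 1) (ht : ∀ k, t k = s₂ ^ k * s₁ * s₂ ^ (-(k : ℤ))) {I : Set ℕ}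
    (hI : ∀ i, t i ∈ Subgroup.closure {x | ∃ k ∈ I, x = t k} → i ∈ I) (g : Γ) (n m : ℕ) {x y : Γ}
    (hx : x ∈ hook s₁ s₂ g n m) (hy : y ∈ hook s₁ s₂ g n m)
    (hxy : x ≠ y) {τ : Γ} (hτ : τ ∈ Subgroup.closure {x | ∃ k ∈ I, x = t k}) :
    x * τ = y ↔ ∃ k ∈ I, k ≤ n ∧ k ≤ m ∧
        ((τ = t k ∧ x = g * s₂ ^ (-(k : ℤ)) ∧ y = g * s₁ * s₂ ^ (-(k : ℤ))) ∨
         (τ = (t k)⁻¹ ∧ x = g * s₁ * s₂ ^ (-(k : ℤ)) ∧ y = g * s₂ ^ (-(k : ℤ)))) := by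
  constructor
  · intro h
    have hντ : ν τ = 1 := closure_le_ker ν hν₁ ht I hτ
    have hτ_eq : τ = x⁻¹ * y := eq_inv_mul_of_mul_eq h
    have hlevel := congrArg ν h
    rcases hx with ⟨i, hi, rfl⟩ | ⟨i, hi, rfl⟩ <;> rcases hy with ⟨j, hj, rfl⟩ | ⟨j, hj, rfl⟩ <;>
      simp only [zpow_neg, zpow_natCast, map_mul, map_inv, map_pow, hν₁, hν₂, hντ, mul_one,
        mul_right_inj, inv_inj, ne_eq, ofAdd_eq_one, one_ne_zero, not_false_eq_true,
        IsMulTorsionFree.pow_right_inj] at hlevel <;> subst hlevel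
    · exact absurd rfl hxy
    · rw [inv_mul_eq_conj ht] at hτ_eq
      exact ⟨i, hI i (hτ_eq ▸ hτ), hi, hj, .inl ⟨hτ_eq, rfl, rfl⟩⟩
    · rw [← inv_inv (_ * _), mul_inv_rev, inv_inv, inv_mul_eq_conj ht] at hτ_eq
      exact ⟨i, hI i (by simpa [hτ_eq] using inv_mem hτ), hj, hi, .inr ⟨hτ_eq, rfl, rfl⟩⟩
    · exact absurd rfl hxy
  · rintro ⟨k, -, -, -, ⟨rfl, rfl, rfl⟩ | ⟨rfl, rfl, rfl⟩⟩
    · rw [← inv_mul_eq_conj ht, mul_inv_cancel_left]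
    · rw [← inv_mul_eq_conj ht, mul_inv_rev, inv_inv, mul_inv_cancel_left]

end Hook

open Lamplighter in
theorem stmt_15_general {Γ : Type*} [Group Γ] (s₁ s₂ : Γ)
    (hΓ : IsFreeOn s₁ s₂ ∨ IsZwrZ s₁ s₂)
    (I : Set ℕ)
    (t : ℕ → Γ) (ht : ∀ k, t k = s₂ ^ k * s₁ * s₂ ^ (-(k : ℤ)))
    (Λ : Subgroup Γ) (hΛ : Λ = Subgroup.closure {x | ∃ k ∈ I, x = t k})
    (g : Γ) (n m : ℕ)
    (P : Set Γ)
    (hP : P = (fun i : ℕ => g * s₂ ^ (-(i : ℤ))) '' {i | i ≤ n} ∪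
          (fun j : ℕ => g * s₁ * s₂ ^ (-(j : ℤ))) '' {j | j ≤ m}) :
    ∀ x ∈ P, ∀ y ∈ P, x ≠ y → ∀ τ ∈ Λ,
      (x * τ = y ↔ ∃ k ∈ I, k ≤ n ∧ k ≤ m ∧
        ((τ = t k ∧ x = g * s₂ ^ (-(k : ℤ)) ∧ y = g * s₁ * s₂ ^ (-(k : ℤ))) ∨
         (τ = (t k)⁻¹ ∧ x = g * s₁ * s₂ ^ (-(k : ℤ)) ∧ y = g * s₂ ^ (-(k : ℤ))))) := by
  obtain ⟨ν, hν₁, hν₂⟩ := exists_monoidHom_of_commute hΓ (1 : Multiplicative ℤ) (.ofAdd 1)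
    fun _ => Commute.all _ _
  obtain ⟨ρ, hρ₁, hρ₂⟩ := exists_monoidHom_of_commute hΓ (lamp 0) shift fun k => by
    rw [shift_zpow_mul_lamp_mul]
    exact commute_lamp k 0
  subst hΛ hP
  intro x hx y hy hxy τ hτ
  exact hook_mul_eq_iff ν hν₁ hν₂ ht (fun i => mem_of_mem_closure_conj ρ hρ₁ hρ₂ ht) g n m
    hx hy hxy hτ

/-- in `Γ` (free on `s₁,s₂` or `ℤ≀ℤ`), with `t_k = s₂^k s₁ s₂^{-k}` and
`Λ_I = ⟨t_k : k ∈ I⟩`, for distinct points `x ≠ y` of a hook `P` (left leg of length `n`,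
right leg of length `m`) and `τ ∈ Λ_I`, the relation `x·τ = y` holds iff `τ = t_k^{±1}`
for some `k ∈ I` with `k ≤ n`, `k ≤ m`, and `{x,y} = {g s₂^{-k}, g s₁ s₂^{-k}}`, matched
according to the sign. -/
theorem stmt_15 {Γ : Type*} [Group Γ] (s₁ s₂ : Γ)
    (hΓ : IsFreeOn s₁ s₂ ∨ IsZwrZ s₁ s₂)
    (I : Set ℕ)
    (t : ℕ → Γ) (ht : ∀ k, t k = s₂ ^ k * s₁ * s₂ ^ (-(k : ℤ)))
    (Λ : Subgroup Γ) (hΛ : Λ = Subgroup.closure {x | ∃ k ∈ I, x = t k})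
    (g : Γ) (n m : ℕ) (hn : 1 ≤ n) (hm : 1 ≤ m)
    (P : Set Γ)
    (hP : P = (fun i : ℕ => g * s₂ ^ (-(i : ℤ))) '' {i | i ≤ n} ∪
          (fun j : ℕ => g * s₁ * s₂ ^ (-(j : ℤ))) '' {j | j ≤ m}) :
    ∀ x ∈ P, ∀ y ∈ P, x ≠ y → ∀ τ ∈ Λ,
      (x * τ = y ↔ ∃ k ∈ I, k ≤ n ∧ k ≤ m ∧
        ((τ = t k ∧ x = g * s₂ ^ (-(k : ℤ)) ∧ y = g * s₁ * s₂ ^ (-(k : ℤ))) ∨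
         (τ = (t k)⁻¹ ∧ x = g * s₁ * s₂ ^ (-(k : ℤ)) ∧ y = g * s₂ ^ (-(k : ℤ))))) :=
  stmt_15_general s₁ s₂ hΓ I t ht Λ hΛ g n m P hP
end

section
/- Let Γ be either the free group on s₁, s₂ or ℤ≀ℤ, F_l = {s₁^{-1}, e, s₁}, I ⊆ ℕ, Λ_I = ⟨s₂^n s₁ s₂^{-n} : n ∈ I⟩, and V_{F_l,I} the ℤ/2[Γ]-submodule of (ℤ/2)^{⊕Γ} generated by {1_{F_l} - 1_{t F_l} : t ∈ Λ_I}. Then for g ∈ Γ, the element w_g = Σ_{h ∈ F_l}(δ_h - δ_{gh}) lies in V_{F_l,I} if and only if g ∈ Λ_I. -/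
open scoped commutatorElement

/-!
Write `a = Σ_{h ∈ F_l} δ_h`, so that `w_g = (1 - δ_g) a` and `V = J a` for the left ideal `J`
spanned by the `1 - δ_τ`, `τ ∈ Λ_I`. Both groups map onto `ℤ` with `s₁ ↦ 1`; comparing the
coefficients of largest degree shows that right multiplication by `a` is injective, so
`w_g ∈ V` forces `1 - δ_g ∈ J`. The coset sums `x ↦ Σ_{h ∈ cΛ} x(h)` vanish on `J` (left
translation permutes the left cosets), while on `1 - δ_g` at the coset `Λ` they give `1`
unless `g ∈ Λ`.
-/

def FreeGroup.exponentSum {α : Type*} [DecidableEq α] (a : α) : FreeGroup α →* Multiplicative ℤ :=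
  FreeGroup.lift fun b => .ofAdd (if b = a then 1 else 0)

lemma exists_monoidHom_apply_eq_ofAdd_one {Γ : Type*} [Group Γ] {s₁ s₂ : Γ}
    (hΓ : IsFreeOn s₁ s₂ ∨ IsZwrZ s₁ s₂) :
    ∃ ψ : Γ →* Multiplicative ℤ, ψ s₁ = .ofAdd 1 := by
  obtain ⟨e, he, -⟩ | ⟨e, he, -⟩ := hΓ
  · refine ⟨(FreeGroup.exponentSum false).comp e.symm.toMonoidHom, ?_⟩
    simp [← he, FreeGroup.exponentSum]
  · have hrel : ∀ r ∈ wreathRels, FreeGroup.exponentSum false r = 1 := by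
      rintro r ⟨k, rfl⟩
      rw [map_commutatorElement, commutatorElement_eq_one_iff_commute]
      exact Commute.all _ _
    refine ⟨(PresentedGroup.toGroup hrel).comp e.symm.toMonoidHom, ?_⟩
    simp only [← he, MonoidHom.comp_apply, MulEquiv.coe_toMonoidHom, MulEquiv.symm_apply_apply]
    exact PresentedGroup.toGroup.of hrel

namespace MonoidAlgebra

variable {k G : Type*} [Group G]

lemma sum_single_sub_single_mul_eq [Ring k] (F : Finset G) (g : G) :
    ∑ h ∈ F, (single h (1 : k) - single (g * h) 1) = (1 - single g 1) * ∑ h ∈ F, single h 1 := by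
  simp only [sub_mul, one_mul, Finset.mul_sum, single_mul_single, Finset.sum_sub_distrib]

lemma coeff_mul_sum_single_one [Semiring k] (x : MonoidAlgebra k G) (F : Finset G) (g : G) :
    (x * ∑ h ∈ F, single h 1).coeff g = ∑ h ∈ F, x.coeff (g * h⁻¹) := by
  simp [Finset.mul_sum, coeff_sum]

lemma isRightRegular_sum_single_one [Ring k] {M : Type*} [CommGroup M] [LinearOrder M]
    [IsOrderedMonoid M] (ψ : G →* M) {F : Finset G} {s : G} (hs : s ∈ F)
    (hmax : ∀ h ∈ F, h ≠ s → ψ h < ψ s) :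
    IsRightRegular (∑ h ∈ F, single h (1 : k)) := by
  refine isRightRegular_of_non_zero_divisor _ fun x hx => ?_
  by_contra hx0
  have hsupp : x.coeff.support.Nonempty := by
    rwa [Finsupp.support_nonempty_iff, ne_eq, ← coeff_zero (R := k) (M := G), coeff_inj]
  obtain ⟨g₀, hg₀, hmax₀⟩ := x.coeff.support.exists_max_image ψ hsupp
  -- at `g₀ * s` only the term `h = s` of the product survives, by maximality of `ψ g₀`
  have hcoeff := congrArg (fun y => y.coeff (g₀ * s)) hx
  simp only [coeff_mul_sum_single_one, coeff_zero, Finsupp.zero_apply] at hcoeff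
  rw [Finset.sum_eq_single_of_mem s hs, mul_inv_cancel_right] at hcoeff
  · exact Finsupp.mem_support_iff.mp hg₀ hcoeff
  · intro h hF hne
    by_contra hx'
    have hle := hmax₀ _ (Finsupp.mem_support_iff.mpr hx')
    rw [map_mul, map_mul, map_inv, mul_assoc, mul_le_iff_le_one_right',
      mul_inv_le_one_iff_le] at hle
    exact (hmax h hF hne).not_ge hle

lemma isRightRegular_sum_single_inv_one_self [Ring k] [DecidableEq G] {M : Type*} [CommGroup M]
    [LinearOrder M] [IsOrderedMonoid M] (ψ : G →* M) {s : G} (hs : 1 < ψ s) :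
    IsRightRegular (∑ h ∈ {s⁻¹, 1, s}, single h (1 : k)) := by
  refine isRightRegular_sum_single_one ψ (s := s) (by simp) ?_
  simp only [Finset.mem_insert, Finset.mem_singleton]
  rintro h (rfl | rfl | rfl) hne
  · simpa using (inv_lt_one'.mpr hs).trans hs
  · simpa using hs
  · exact absurd rfl hne

lemma mapDomain_coeff_single_one_mul [Semiring k] (Λ : Subgroup G) (a : G)
    (x : MonoidAlgebra k G) :
    (single a 1 * x).coeff.mapDomain (QuotientGroup.mk (s := Λ)) =
      (x.coeff.mapDomain QuotientGroup.mk).mapDomain (a • ·) := by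
  have hleft : (single a 1 * x).coeff = x.coeff.mapDomain (a * ·) := by
    ext y
    rw [coeff_single_mul_apply, one_mul, ← Finsupp.mapDomain_apply (mul_right_injective a),
      mul_inv_cancel_left]
  rw [hleft, ← Finsupp.mapDomain_comp, ← Finsupp.mapDomain_comp]
  rfl

lemma mapDomain_coeff_mul_eq_zero [Semiring k] (Λ : Subgroup G) (r : MonoidAlgebra k G)
    {x : MonoidAlgebra k G} (hx : x.coeff.mapDomain (QuotientGroup.mk (s := Λ)) = 0) :
    (r * x).coeff.mapDomain (QuotientGroup.mk (s := Λ)) = 0 := by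
  induction r using MonoidAlgebra.induction_on with
  | of a => rw [of_apply, mapDomain_coeff_single_one_mul, hx, Finsupp.mapDomain_zero]
  | add r r' hr hr' => rw [add_mul, coeff_add, Finsupp.mapDomain_add, hr, hr', add_zero]
  | smul c r hr => rw [smul_mul_assoc, coeff_smul, Finsupp.mapDomain_smul, hr, smul_zero]

lemma mapDomain_coeff_eq_zero_of_mem_span [Ring k] {Λ : Subgroup G} {y : MonoidAlgebra k G}
    (hy : y ∈ Submodule.span (MonoidAlgebra k G)
      ((fun τ : G => (1 : MonoidAlgebra k G) - single τ 1) '' Λ)) :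
    y.coeff.mapDomain (QuotientGroup.mk (s := Λ)) = 0 := by
  induction hy using Submodule.span_induction with
  | mem y hy =>
    obtain ⟨τ, hτ, rfl⟩ := hy
    rw [coeff_sub, Finsupp.mapDomain_sub, one_def, coeff_single, coeff_single,
      Finsupp.mapDomain_single, Finsupp.mapDomain_single, sub_eq_zero,
      QuotientGroup.eq.mpr (by simpa using hτ)]
  | zero => rw [coeff_zero, Finsupp.mapDomain_zero]
  | add x y _ _ hx hy => rw [coeff_add, Finsupp.mapDomain_add, hx, hy, add_zero]
  | smul r x _ hx => exact mapDomain_coeff_mul_eq_zero Λ r hx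

lemma mem_of_one_sub_single_mem_span [Ring k] [Nontrivial k] {Λ : Subgroup G} {g : G}
    (hg : 1 - single g 1 ∈ Submodule.span (MonoidAlgebra k G)
      ((fun τ : G => (1 : MonoidAlgebra k G) - single τ 1) '' Λ)) :
    g ∈ Λ := by
  by_contra hgΛ
  have hne : (QuotientGroup.mk g : G ⧸ Λ) ≠ QuotientGroup.mk 1 := by
    rwa [ne_eq, QuotientGroup.eq, mul_one, inv_mem_iff]
  have := congrArg (· (QuotientGroup.mk 1)) (mapDomain_coeff_eq_zero_of_mem_span hg)
  simp [coeff_sub, Finsupp.mapDomain_sub, one_def, hne] at this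

end MonoidAlgebra

lemma Submodule.mem_span_image_mul_right_iff {R : Type*} [Ring R] {a : R} (ha : IsRightRegular a)
    (S : Set R) (x : R) : x * a ∈ span R ((· * a) '' S) ↔ x ∈ span R S := by
  have := span_image (LinearMap.toSpanSingleton R R a) (s := S)
  simp only [LinearMap.toSpanSingleton_apply, smul_eq_mul] at this
  rw [this, mem_map]
  exact ⟨fun ⟨y, hy, hya⟩ => ha hya ▸ hy, fun hx => ⟨x, hx, rfl⟩⟩

open MonoidAlgebra

theorem stmt_16_general {Γ : Type*} [Group Γ] [DecidableEq Γ] (s₁ s₂ : Γ)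
    (hΓ : IsFreeOn s₁ s₂ ∨ IsZwrZ s₁ s₂)
    (Λ : Subgroup Γ)
    (Fl : Finset Γ) (hFl : Fl = {s₁⁻¹, 1, s₁})
    (w : Γ → MonoidAlgebra (ZMod 2) Γ)
    (hw : ∀ g : Γ, w g = ∑ h ∈ Fl,
      (MonoidAlgebra.single h 1 - MonoidAlgebra.single (g * h) 1))
    (V : Submodule (MonoidAlgebra (ZMod 2) Γ) (MonoidAlgebra (ZMod 2) Γ))
    (hV : V = Submodule.span (MonoidAlgebra (ZMod 2) Γ) {x | ∃ τ ∈ Λ, x = w τ})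
    (g : Γ) :
    w g ∈ V ↔ g ∈ Λ := by
  subst hFl hV
  obtain ⟨ψ, hψ⟩ := exists_monoidHom_apply_eq_ofAdd_one hΓ
  set a := ∑ h ∈ {s₁⁻¹, 1, s₁}, single h (1 : ZMod 2)
  have ha : IsRightRegular a := isRightRegular_sum_single_inv_one_self ψ <| by
    rw [hψ]
    exact Multiplicative.ofAdd_lt.mpr one_pos
  have hwa (g : Γ) : w g = (1 - single g 1) * a := by rw [hw, sum_single_sub_single_mul_eq]
  have hgens : {x | ∃ τ ∈ Λ, x = w τ} = (· * a) '' ((fun τ : Γ => 1 - single τ 1) '' Λ) := by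
    rw [Set.image_image]
    ext x
    simp [hwa, eq_comm]
  constructor
  · intro hg
    rw [hgens, hwa, Submodule.mem_span_image_mul_right_iff ha] at hg
    exact mem_of_one_sub_single_mem_span hg
  · intro hg
    exact Submodule.subset_span ⟨g, hg, rfl⟩

/-- in `Γ` (free on `s₁,s₂` or `ℤ≀ℤ`), with `F_l = {s₁⁻¹, e, s₁}`,
`Λ_I = ⟨s₂^n s₁ s₂^{-n} : n ∈ I⟩` and `V_{F_l,I}` the `ℤ/2[Γ]`-submodule of `ℤ/2[Γ]`
generated by the `w_τ = Σ_{h∈F_l}(δ_h − δ_{τh})`, `τ ∈ Λ_I`, one has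
`w_g ∈ V_{F_l,I} ↔ g ∈ Λ_I`. -/
theorem stmt_16 {Γ : Type*} [Group Γ] [DecidableEq Γ] (s₁ s₂ : Γ)
    (hΓ : IsFreeOn s₁ s₂ ∨ IsZwrZ s₁ s₂)
    (I : Set ℕ)
    (t : ℕ → Γ) (ht : ∀ k, t k = s₂ ^ k * s₁ * s₂ ^ (-(k : ℤ)))
    (Λ : Subgroup Γ) (hΛ : Λ = Subgroup.closure {x | ∃ k ∈ I, x = t k})
    (Fl : Finset Γ) (hFl : Fl = {s₁⁻¹, 1, s₁})
    (w : Γ → MonoidAlgebra (ZMod 2) Γ)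
    (hw : ∀ g : Γ, w g = ∑ h ∈ Fl,
      (MonoidAlgebra.single h 1 - MonoidAlgebra.single (g * h) 1))
    (V : Submodule (MonoidAlgebra (ZMod 2) Γ) (MonoidAlgebra (ZMod 2) Γ))
    (hV : V = Submodule.span (MonoidAlgebra (ZMod 2) Γ) {x | ∃ τ ∈ Λ, x = w τ})
    (g : Γ) :
    w g ∈ V ↔ g ∈ Λ :=
  stmt_16_general s₁ s₂ hΓ Λ Fl hFl w hw V hV g
end
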